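/- arXiv:2506.14899 — 4 statements merged into one kernel-verified Lean document; each statement's English description precedes it below -/
import Mathlib

section
/- Let α ∈ (0,∞), τ ∈ (0,∞), s ∈ [0,∞], d ∈ ℕ, and P ∈ T^{d,s}_{α,τ}. Let g : [0,1]^d → ℝ be measurable and bounded with g(x) = sgn(2·η_P(x) − 1) for P_X-almost every x. Then: (i) the infimum of R_P^{φ_h}(f) over all bounded measurable f : [0,1]^d → ℝ equals R_P^{φ_h}(g); and (ii) for every measurable f : [0,1]^d → [−1,1], ∫ |φ_h(y·f(x)) − φ_h(y·g(x))|² dP(x,y) = ∫ |f(x) − g(x)|² dP_X(x) ≤ 6·max{1, α, 1/τ}·(E_P^{φ_h}(f))^{s/(s+1)}, where s/(s+1) := 1 when s = ∞. -/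
open MeasureTheory ENNReal Set

noncomputable section

namespace ZZS

/-! ## Basic geometry -/

/-- The closed unit cube `[0,1]^m`. -/
def cube (m : ℕ) : Set (Fin m → ℝ) := Set.univ.pi fun _ => Set.Icc (0 : ℝ) 1

/-- The open unit cube `(0,1)^m`. -/
def cubeo (m : ℕ) : Set (Fin m → ℝ) := Set.univ.pi fun _ => Set.Ioo (0 : ℝ) 1

/-- The label set `{-1, 1} ⊆ ℝ`. -/
def labels : Set ℝ := {-1, 1}

/-- Euclidean distance on `Fin m → ℝ`. -/
def e2 {m : ℕ} (x z : Fin m → ℝ) : ℝ := Real.sqrt (∑ i, (x i - z i) ^ 2)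

/-! ## Multi-index partial derivatives and Hölder balls -/

/-- Iterated partial derivative along a list of coordinate directions. -/
def pderivList {m : ℕ} : List (Fin m) → ((Fin m → ℝ) → ℝ) → (Fin m → ℝ) → ℝ
  | [], f => f
  | i :: l, f => pderivList l fun x => fderiv ℝ f x (Pi.single i 1)

/-- The canonical list of directions attached to a multi-index. -/
def idxList {m : ℕ} (u : Fin m → ℕ) : List (Fin m) :=
  (List.finRange m).flatMap fun i => List.replicate (u i) i

/-- The partial derivative `D^u f` for a multi-index `u`. -/
def Dm {m : ℕ} (u : Fin m → ℕ) (f : (Fin m → ℝ) → ℝ) : (Fin m → ℝ) → ℝ :=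
  pderivList (idxList u) f

/-- The order `‖u‖₁` of a multi-index `u`. -/
def mord {m : ℕ} (u : Fin m → ℕ) : ℕ := ∑ i, u i

/-- The Hölder-`β` norm of `f`, suprema taken over the set `S` (value in `ℝ≥0∞`). -/
def holderNormOn (m : ℕ) (β : ℝ) (S : Set (Fin m → ℝ)) (f : (Fin m → ℝ) → ℝ) : ℝ≥0∞ :=
  (⨆ (u : Fin m → ℕ) (_ : (mord u : ℝ) < β) (x ∈ S), ENNReal.ofReal |Dm u f x|) +
    ⨆ (u : Fin m → ℕ) (_ : (⌈β⌉ : ℝ) - 1 ≤ (mord u : ℝ) ∧ (mord u : ℝ) < β)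
      (x ∈ S) (z ∈ S) (_ : x ≠ z),
      ENNReal.ofReal |Dm u f x - Dm u f z| /
        ENNReal.ofReal (e2 x z) ^ (β + 1 - (⌈β⌉ : ℝ))

/-- `⌈β - 1⌉`, the number of derivatives required for Hölder-`β` smoothness. -/
def smoothOrder (β : ℝ) : ℕ := ⌈β - 1⌉₊

/-- The Hölder ball `B^β_r([0,1]^m)`:  `⌈β-1⌉`-times continuously differentiable functions on
the interior of the cube (with uniformly continuous derivatives, so that they extend
continuously), with Hölder-`β` norm at most `r`. -/
def HolderBall (m : ℕ) (β r : ℝ) : Set ((Fin m → ℝ) → ℝ) :=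
  {f | ContinuousOn f (cube m) ∧
    ContDiffOn ℝ (smoothOrder β : ℕ∞) f (cubeo m) ∧
    (∀ u : Fin m → ℕ, (mord u : ℝ) < β → UniformContinuousOn (Dm u f) (cubeo m)) ∧
    holderNormOn m β (cubeo m) f ≤ ENNReal.ofReal r}

/-! ## Compositional function classes -/

/-- `G^H_m(dstar, β, r)`: Hölder-`β` functions of `dstar` of the `m` coordinates. -/
def GH (m dstar : ℕ) (β r : ℝ) : Set ((Fin m → ℝ) → ℝ) :=
  {f | ∃ (e : Fin dstar → Fin m) (g : (Fin dstar → ℝ) → ℝ),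
    StrictMono e ∧ g ∈ HolderBall dstar β r ∧ ∀ x ∈ cube m, f x = g fun j => x (e j)}

/-- `G^M_m(dmax)`: maxima of at most `dmax` coordinates. -/
def GM (m dmax : ℕ) : Set ((Fin m → ℝ) → ℝ) :=
  {f | ∃ (I : Finset (Fin m)) (hI : I.Nonempty), I.card ≤ dmax ∧
    ∀ x ∈ cube m, f x = I.sup' hI fun i => x i}

/-- The compositional class `G^CHOM_d(q, K, dmax, dstar, β, r)`. -/
def GCHOM (K dmax dstar : ℕ) (β r : ℝ) : ℕ → (d : ℕ) → Set ((Fin d → ℝ) → ℝ)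
  | 0, d => {f | ∃ h ∈ GH d dstar β r ∪ GM d dmax, ∀ x ∈ cube d, f x = h x}
  | q + 1, d =>
    {f | ∃ (H : (Fin d → ℝ) → Fin K → ℝ) (g : (Fin K → ℝ) → ℝ),
      (∀ j, (fun x => H x j) ∈ GH d dstar β r ∪ GM d dmax) ∧
      (∀ x ∈ cube d, H x ∈ cube K) ∧
      g ∈ GCHOM K dmax dstar β r q K ∧ ∀ x ∈ cube d, f x = g (H x)}

/-- The compositional class `G^CH_d(q, K, dstar, β, r)` (no max-value components). -/
def GCH (K dstar : ℕ) (β r : ℝ) : ℕ → (d : ℕ) → Set ((Fin d → ℝ) → ℝ)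
  | 0, d => {f | ∃ h ∈ GH d dstar β r, ∀ x ∈ cube d, f x = h x}
  | q + 1, d =>
    {f | ∃ (H : (Fin d → ℝ) → Fin K → ℝ) (g : (Fin K → ℝ) → ℝ),
      (∀ j, (fun x => H x j) ∈ GH d dstar β r) ∧
      (∀ x ∈ cube d, H x ∈ cube K) ∧
      g ∈ GCH K dstar β r q K ∧ ∀ x ∈ cube d, f x = g (H x)}

/-! ## Losses, risks, and data distributions -/

/-- The sign function (`sgn 0 = 1`). -/
def sgn (t : ℝ) : ℝ := if 0 ≤ t then 1 else -1

/-- The hinge loss. -/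
def hinge (t : ℝ) : ℝ := max 0 (1 - t)

/-- The truncation operator `T_F`. -/
def trunc (F t : ℝ) : ℝ := min F (max (-F) t)

/-- The joint distribution `P_{η,Q}` on `[0,1]^d × {-1,1}` with input marginal `Q` and
conditional class probability function `η`. -/
def jointMeasure {d : ℕ} (η : (Fin d → ℝ) → ℝ) (Q : Measure (Fin d → ℝ)) :
    Measure ((Fin d → ℝ) × ℝ) :=
  Q.bind fun x =>
    ENNReal.ofReal (η x) • Measure.dirac (x, (1 : ℝ)) +
      ENNReal.ofReal (1 - η x) • Measure.dirac (x, (-1 : ℝ))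

/-- The 0-1 risk (misclassification error). -/
def risk01 {d : ℕ} (P : Measure ((Fin d → ℝ) × ℝ)) (f : (Fin d → ℝ) → ℝ) : ℝ :=
  (P {p | sgn (f p.1) ≠ p.2}).toReal

/-- The infimum of the 0-1 risk over all measurable functions. -/
def bayes01 {d : ℕ} (P : Measure ((Fin d → ℝ) × ℝ)) : ℝ :=
  ⨅ g : {g : (Fin d → ℝ) → ℝ // Measurable g}, risk01 P g.1

/-- The excess 0-1 risk. -/
def excess01 {d : ℕ} (P : Measure ((Fin d → ℝ) × ℝ)) (f : (Fin d → ℝ) → ℝ) : ℝ :=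
  risk01 P f - bayes01 P

/-- The `φ`-risk. -/
def riskPhi {d : ℕ} (φ : ℝ → ℝ) (P : Measure ((Fin d → ℝ) × ℝ)) (f : (Fin d → ℝ) → ℝ) : ℝ :=
  ∫ p, φ (p.2 * f p.1) ∂P

/-- The infimum of the `φ`-risk over all measurable functions. -/
def bayesPhi {d : ℕ} (φ : ℝ → ℝ) (P : Measure ((Fin d → ℝ) × ℝ)) : ℝ :=
  ⨅ g : {g : (Fin d → ℝ) → ℝ // Measurable g}, riskPhi φ P g.1

/-- The excess `φ`-risk. -/
def excessPhi {d : ℕ} (φ : ℝ → ℝ) (P : Measure ((Fin d → ℝ) × ℝ)) (f : (Fin d → ℝ) → ℝ) : ℝ :=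
  riskPhi φ P f - bayesPhi φ P

/-- A Borel probability measure on `[0,1]^d × {-1,1}`, presented by its input marginal `Q`
(a Borel probability measure concentrated on the cube) and its conditional class
probability function `η` (measurable, `[0,1]`-valued);  the measure itself is
`jointMeasure η Q`. -/
structure DataDist (d : ℕ) where
  η : (Fin d → ℝ) → ℝ
  Q : Measure (Fin d → ℝ)
  η_meas : Measurable η
  η_mem : ∀ x, η x ∈ Set.Icc (0 : ℝ) 1
  Q_prob : IsProbabilityMeasure Q
  Q_cube : Q (cube d) = 1

/-- The measure on `[0,1]^d × {-1,1}` associated with a `DataDist`. -/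
def DataDist.P {d : ℕ} (D : DataDist d) : Measure ((Fin d → ℝ) × ℝ) := jointMeasure D.η D.Q

/-- `x ^ s` for `s ∈ [0,∞]`, with the conventions `x ^ ∞ = 0` for `x < 1` and `1 ^ ∞ = 1`. -/
def rpowE (x : ℝ≥0∞) (s : ℝ≥0∞) : ℝ≥0∞ :=
  if s = ∞ then (if x < 1 then 0 else if x = 1 then 1 else ∞) else x ^ s.toReal

/-- The Tsybakov noise class `T^{d,s}_{α,τ}` (noise exponent `s ∈ [0,∞]`,
threshold `τ ∈ (0,∞]`). -/
def Tsybakov (d : ℕ) (s : ℝ≥0∞) (α : ℝ) (τ : ℝ≥0∞) : Set (DataDist d) :=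
  {P | ∀ t : ℝ, 0 < t → ENNReal.ofReal t ≤ τ →
    P.Q ({x | |2 * P.η x - 1| ≤ t} ∩ cube d) ≤ ENNReal.ofReal α * rpowE (ENNReal.ofReal t) s}

/-- The class `H^{d,β,r}_{q,K,dstar,dmax}`: distributions whose conditional class probability
agrees a.s. with a member of `G^CHOM`. -/
def HCHOM (d q K dstar dmax : ℕ) (β r : ℝ) : Set (DataDist d) :=
  {P | ∃ f ∈ GCHOM K dmax dstar β r q d, ∀ᵐ x ∂P.Q, P.η x = f x}

/-- `M_{Λ,d}`: Borel probability measures on `[0,1]^d` with a `[0,Λ]`-valued density with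
respect to Lebesgue measure. -/
def MLam (d : ℕ) (Λ : ℝ) : Set (Measure (Fin d → ℝ)) :=
  {Q | ∃ g : (Fin d → ℝ) → ℝ, Measurable g ∧ (∀ x, g x ∈ Set.Icc 0 Λ) ∧
    Q = (volume.restrict (cube d)).withDensity fun x => ENNReal.ofReal (g x)}

/-- The class `H^{d,β,r,Λ}_{q,K,dstar}`: joint laws `P_{η,Q}` with `η ∈ G^CH` (valued in
`[0,1]`) and `Q ∈ M_{Λ,d}`. -/
def HCHL (d q K dstar : ℕ) (β r Λ : ℝ) : Set (DataDist d) :=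
  {P | (∃ f ∈ GCH K dstar β r q d, (∀ x ∈ cube d, f x ∈ Set.Icc (0 : ℝ) 1) ∧
      ∀ᵐ x ∂P.Q, P.η x = f x) ∧ P.Q ∈ MLam d Λ}

/-- The class `H^{d,β,r}_{q,K,dstar}`: joint laws `P_{η,Q}` with `η ∈ G^CH` (valued in
`[0,1]`) and `Q` an arbitrary Borel probability measure on the cube. -/
def HCH (d q K dstar : ℕ) (β r : ℝ) : Set (DataDist d) :=
  {P | ∃ f ∈ GCH K dstar β r q d, (∀ x ∈ cube d, f x ∈ Set.Icc (0 : ℝ) 1) ∧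
    ∀ᵐ x ∂P.Q, P.η x = f x}

/-! ## Samples and estimators -/

/-- The law of an i.i.d. sample of size `n` from `μ`. -/
def iid {α : Type*} [MeasurableSpace α] (μ : Measure α) : (n : ℕ) → Measure (Fin n → α)
  | 0 => Measure.dirac fun i => i.elim0
  | n + 1 => (iid μ n).bind fun p => μ.map fun a => Fin.snoc p a

/-- An estimator: a rule assigning to each sample of size `n` a function `[0,1]^d → ℝ`. -/
def Estimator (d n : ℕ) := (Fin n → (Fin d → ℝ) × ℝ) → (Fin d → ℝ) → ℝ

/-- (Joint) measurability of an estimator. -/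
def Estimator.Meas {d n : ℕ} (A : Estimator d n) : Prop :=
  Measurable fun p : (Fin n → (Fin d → ℝ) × ℝ) × (Fin d → ℝ) => A p.1 p.2

/-- The expected excess 0-1 risk `E_{P^{⊗n}}[E_P(f̂_n)]` of an estimator. -/
def expectedExcess01 {d : ℕ} (P : Measure ((Fin d → ℝ) × ℝ)) {n : ℕ} (A : Estimator d n) : ℝ :=
  ∫ ω, excess01 P (A ω) ∂iid P n

/-- The covering number `N(F, γ)` (uniform norm over `Ω`), valued in `ℝ≥0∞`. -/
def coveringNumber {X : Type*} (Ω : Set X) (F : Set (X → ℝ)) (γ : ℝ) : ℝ≥0∞ :=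
  ⨅ (A : Finset (X → ℝ))
    (_ : ↑A ⊆ F ∧ ∀ f ∈ F, ∃ g ∈ A, ∀ x ∈ Ω, |f x - g x| ≤ γ),
    (A.card : ℝ≥0∞)

/-- `f` is an empirical `φ`-risk minimizer over `F` for the sample `ω`. -/
def IsERM {d n : ℕ} (φ : ℝ → ℝ) (F : Set ((Fin d → ℝ) → ℝ))
    (ω : Fin n → (Fin d → ℝ) × ℝ) (f : (Fin d → ℝ) → ℝ) : Prop :=
  f ∈ F ∧ ∀ g ∈ F,
    (n : ℝ)⁻¹ * ∑ i, φ ((ω i).2 * f ((ω i).1)) ≤ (n : ℝ)⁻¹ * ∑ i, φ ((ω i).2 * g ((ω i).1))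

/-! ## ReLU neural networks -/

/-- A feedforward ReLU network with input dimension `d`. -/
structure ReLUNet (d : ℕ) where
  L : ℕ
  width : ℕ → ℕ
  W : (i : ℕ) → Fin (width (i + 1)) → Fin (width i) → ℝ
  v : (i : ℕ) → Fin (width i) → ℝ
  h0 : width 0 = d
  hL : width (L + 1) = 1

/-- The `i`-th intermediate layer output `W_i σ_{v_i} ⋯ W_1 σ_{v_1} W_0 x`. -/
def ReLUNet.layer {d : ℕ} (net : ReLUNet d) (x : Fin (net.width 0) → ℝ) :
    (i : ℕ) → Fin (net.width (i + 1)) → ℝ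
  | 0 => fun j => ∑ k, net.W 0 j k * x k
  | i + 1 => fun j => ∑ k, net.W (i + 1) j k * max 0 (net.layer x i k - net.v (i + 1) k)

/-- The real-valued function computed by a ReLU network. -/
def ReLUNet.eval {d : ℕ} (net : ReLUNet d) (x : Fin d → ℝ) : ℝ :=
  net.layer (fun j => x (Fin.cast net.h0 j)) net.L (Fin.cast net.hL.symm 0)

/-- The class `F^NN_d(G, N, S, B, Fb)` of ReLU networks with depth `≤ G`, widths `≤ N`,
at most `S` nonzero parameters, parameter magnitudes `≤ B`, and uniform norm on the cube
`≤ Fb`. -/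
def FNN (d : ℕ) (G N : ℝ) (S : ℝ≥0∞) (B : ℝ) (Fb : ℝ≥0∞) : Set ((Fin d → ℝ) → ℝ) :=
  {f | ∃ net : ReLUNet d,
    (∀ x, f x = net.eval x) ∧
    (net.L : ℝ) ≤ G ∧
    (∀ i ≤ net.L + 1, (net.width i : ℝ) ≤ N) ∧
    ((∑ i ∈ Finset.range (net.L + 1),
        (Nat.card {p : Fin (net.width (i + 1)) × Fin (net.width i) // net.W i p.1 p.2 ≠ 0}
          : ℝ≥0∞)) +
      ∑ i ∈ Finset.range net.L,
        (Nat.card {j : Fin (net.width (i + 1)) // net.v (i + 1) j ≠ 0} : ℝ≥0∞)) ≤ S ∧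
    (∀ i ≤ net.L, ∀ j k, |net.W i j k| ≤ B) ∧
    (∀ i, 1 ≤ i → i ≤ net.L → ∀ j, |net.v i j| ≤ B) ∧
    ∀ x ∈ cube d, ENNReal.ofReal |f x| ≤ Fb}

/-! ## Kullback–Leibler divergence -/

open Classical in
/-- The Kullback–Leibler divergence. -/
def KL {X : Type*} [MeasurableSpace X] (P Q : Measure X) : ℝ≥0∞ :=
  if P ≪ Q ∧ Integrable (fun x => Real.log (P.rnDeriv Q x).toReal) P then
    ENNReal.ofReal (∫ x, Real.log (P.rnDeriv Q x).toReal ∂P)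
  else ∞

/-- The exponent `e / (dstar/(s+1) + (1 + 1/(s+1))·e)` of the minimax rate, for noise
exponent `s ∈ [0,∞]` (equal to `1` when `s = ∞`). -/
def rateExp (dstar : ℕ) (e : ℝ) (s : ℝ≥0∞) : ℝ :=
  if s = ∞ then 1
  else e / ((dstar : ℝ) / (s.toReal + 1) + (1 + 1 / (s.toReal + 1)) * e)

/-!
Conditionally on `x`, the hinge risk of a prediction `t` is
`C(η, t) = η (1 - t)₊ + (1 - η) (1 + t)₊` with `η = η(x)`. It is at least `1 - |2η - 1|`, with
equality at `t = sgn (2η - 1)`, which gives (i). On `[-1, 1]` the map `t ↦ C(η, t)` is affine, so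
the excess risk of `f` dominates `E = ∫ |2η - 1| |f - g| dP_X`, and the hinge increments are
`±(f - g)`. Splitting the cube at the low-noise set `{|2η - 1| ≤ t}`, where `(f - g)² ≤ 4`, and
its complement, where `(f - g)² ≤ (2 / t) |2η - 1| |f - g|`, the noise condition gives
`∫ (f - g)² dP_X ≤ 4 α t ^ s + 2 E / t` for `t ≤ τ`; the choice `t = E ^ (1 / (s + 1))` balances
the two terms.
-/

lemma hinge_nonneg (t : ℝ) : 0 ≤ hinge t := le_max_left _ _

lemma measurable_hinge : Measurable hinge :=
  (continuous_const.max (continuous_const.sub continuous_id)).measurable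

lemma hinge_of_le_one {t : ℝ} (h : t ≤ 1) : hinge t = 1 - t :=
  max_eq_right (by linarith)

lemma hinge_le_one_add_abs (t : ℝ) : hinge t ≤ 1 + |t| :=
  max_le (by positivity) (by linarith [neg_abs_le t])

lemma abs_sgn (t : ℝ) : |sgn t| = 1 := by
  unfold sgn; split_ifs <;> norm_num

lemma sgn_mem_Icc (t : ℝ) : sgn t ∈ Icc (-1 : ℝ) 1 := by
  unfold sgn; split_ifs <;> norm_num

lemma mul_sgn_self (u : ℝ) : u * sgn u = |u| := by
  unfold sgn
  split_ifs with h
  · rw [abs_of_nonneg h, mul_one]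
  · rw [abs_of_neg (not_le.mp h), mul_neg_one]

lemma mul_sgn_sub {u t : ℝ} (ht : t ∈ Icc (-1 : ℝ) 1) : u * (sgn u - t) = |u| * |t - sgn u| := by
  obtain ⟨ht₀, ht₁⟩ := ht
  unfold sgn
  split_ifs with h
  · rw [abs_of_nonneg h, abs_of_nonpos (by linarith : t - 1 ≤ 0)]; ring
  · rw [abs_of_neg (not_le.mp h), abs_of_nonneg (by linarith : 0 ≤ t - -1)]; ring

lemma sq_le_of_abs_le_two {a e t : ℝ} (ha : |a| ≤ 2) (he : 0 ≤ e) (ht : 0 < t) :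
    a ^ 2 ≤ (if e ≤ t then 4 else 0) + 2 / t * (e * |a|) := by
  rw [← sq_abs]
  split_ifs with h
  · have : 0 ≤ 2 / t * (e * |a|) := by positivity
    nlinarith [abs_nonneg a]
  · rw [zero_add, div_mul_eq_mul_div, le_div_iff₀ ht]
    nlinarith [mul_le_mul_of_nonneg_left ha (mul_nonneg (abs_nonneg a) ht.le),
      mul_le_mul_of_nonneg_left (not_le.mp h).le (abs_nonneg a)]

lemma le_mul_rpow_of_forall_le_add_of_pos {V E α τ σ : ℝ} (hα : 0 ≤ α) (hτ : 0 < τ)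
    (hσ : 0 ≤ σ) (hE : 0 < E) (hV : V ≤ 4)
    (h : ∀ t, 0 < t → t ≤ τ → V ≤ 4 * (α * t ^ σ) + 2 / t * E) :
    V ≤ 6 * max 1 (max α (1 / τ)) * E ^ (σ / (σ + 1)) := by
  set M := max 1 (max α (1 / τ))
  set θ := σ / (σ + 1)
  have hM₁ : 1 ≤ M := le_max_left _ _
  have hMα : α ≤ M := (le_max_left _ _).trans (le_max_right _ _)
  have hMτ : 1 / τ ≤ M := (le_max_right _ _).trans (le_max_right _ _)
  have hθ₁ : θ ≤ 1 := div_le_one_of_le₀ (by linarith) (by linarith)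
  rcases le_or_gt 1 E with hE₁ | hE₁
  · nlinarith [Real.one_le_rpow hE₁ (by positivity : 0 ≤ θ)]
  -- `u` balances the two terms: `u ^ σ = E / u = E ^ θ`
  set u := E ^ (1 / (σ + 1))
  have hu : 0 < u := Real.rpow_pos_of_pos hE _
  have huσ : u ^ σ = E ^ θ := by
    rw [← Real.rpow_mul hE.le]
    congr 1
    simp only [θ]
    field_simp
  have hEu : E / u = E ^ θ := by
    rw [div_eq_iff hu.ne', ← Real.rpow_add hE]
    conv_lhs => rw [← Real.rpow_one E]
    congr 1
    simp only [θ]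
    field_simp
  have hEθ : 0 ≤ E ^ θ := by positivity
  rcases le_total u τ with huτ | hτu
  · calc V ≤ 4 * (α * u ^ σ) + 2 / u * E := h u hu huτ
      _ = (4 * α + 2) * E ^ θ := by rw [huσ, div_mul_eq_mul_div, mul_div_assoc, hEu]; ring
      _ ≤ 6 * M * E ^ θ := by gcongr; linarith
  · have hτσ : τ ^ σ ≤ E ^ θ := huσ ▸ Real.rpow_le_rpow hτ.le hτu hσ
    have hE_le : E ≤ E ^ θ := Real.self_le_rpow_of_le_one hE.le hE₁.le hθ₁
    calc V ≤ 4 * (α * τ ^ σ) + 2 * (1 / τ) * E := by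
          convert h τ hτ le_rfl using 2; ring
      _ ≤ 4 * (α * E ^ θ) + 2 * M * E ^ θ := by gcongr
      _ ≤ 6 * M * E ^ θ := by nlinarith

lemma le_mul_rpow_of_forall_le_add {V E α τ σ : ℝ} (hα : 0 ≤ α) (hτ : 0 < τ)
    (hσ : 0 ≤ σ) (hE : 0 ≤ E) (hV : V ≤ 4)
    (h : ∀ t, 0 < t → t ≤ τ → V ≤ 4 * (α * t ^ σ) + 2 / t * E) :
    V ≤ 6 * max 1 (max α (1 / τ)) * E ^ (σ / (σ + 1)) := by
  -- the hypothesis survives enlarging `E`, so the bound holds for every `E' > E`; let `E' ↓ E`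
  have hlim := (((Real.continuous_rpow_const (by positivity : 0 ≤ σ / (σ + 1))).tendsto E).mono_left
    (nhdsWithin_le_nhds (s := Ioi E))).const_mul (6 * max 1 (max α (1 / τ)))
  refine ge_of_tendsto hlim ?_
  filter_upwards [self_mem_nhdsWithin] with E' hE'
  exact le_mul_rpow_of_forall_le_add_of_pos hα hτ hσ (hE.trans_lt hE') hV
    fun t ht htτ => (h t ht htτ).trans (by gcongr; exact hE'.le)

lemma le_mul_of_forall_le_div {V E τ : ℝ} (hτ : 0 < τ) (hE : 0 ≤ E)
    (h : ∀ t, 0 < t → t ≤ τ → t < 1 → V ≤ 2 / t * E) : V ≤ 4 * max 1 (1 / τ) * E := by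
  have ht : 0 < min τ (1 / 2) := lt_min hτ (by norm_num)
  have hdiv : 2 / min τ (1 / 2) ≤ 4 * max 1 (1 / τ) := by
    rcases min_choice τ (1 / 2) with hmin | hmin <;> rw [hmin]
    · have : 1 / τ ≤ max 1 (1 / τ) := le_max_right _ _
      have : 0 < 1 / τ := by positivity
      linarith [show 2 / τ = 2 * (1 / τ) by ring]
    · linarith [le_max_left 1 (1 / τ)]
  calc V ≤ 2 / min τ (1 / 2) * E :=
        h _ ht (min_le_left _ _) ((min_le_right _ _).trans_lt (by norm_num))
    _ ≤ 4 * max 1 (1 / τ) * E := by gcongr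

lemma abs_two_mul_sub_one_le {η : ℝ} (hη : η ∈ Icc (0 : ℝ) 1) : |2 * η - 1| ≤ 1 :=
  abs_le.2 ⟨by linarith [hη.1], by linarith [hη.2]⟩

def condHingeRisk (η t : ℝ) : ℝ := η * hinge t + (1 - η) * hinge (-t)

section condHingeRisk

variable {η : ℝ}

lemma condHingeRisk_nonneg (hη : η ∈ Icc (0 : ℝ) 1) (t : ℝ) : 0 ≤ condHingeRisk η t :=
  add_nonneg (mul_nonneg hη.1 (hinge_nonneg t)) (mul_nonneg (by linarith [hη.2]) (hinge_nonneg _))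

lemma condHingeRisk_le (hη : η ∈ Icc (0 : ℝ) 1) (t : ℝ) : condHingeRisk η t ≤ 1 + |t| := by
  have h₁ := hinge_le_one_add_abs t
  have h₂ := hinge_le_one_add_abs (-t)
  rw [abs_neg] at h₂
  unfold condHingeRisk
  nlinarith [hη.1, hη.2]

lemma one_sub_abs_le_condHingeRisk (hη : η ∈ Icc (0 : ℝ) 1) (t : ℝ) :
    1 - |2 * η - 1| ≤ condHingeRisk η t := by
  obtain ⟨hη₀, hη₁⟩ := hη
  have h₁ : 1 - t ≤ hinge t := le_max_right _ _
  have h₂ : 1 + t ≤ hinge (-t) := by rw [← sub_neg_eq_add]; exact le_max_right _ _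
  have := hinge_nonneg t
  have := hinge_nonneg (-t)
  unfold condHingeRisk
  rcases abs_cases (2 * η - 1) with ⟨h, _⟩ | ⟨h, _⟩ <;> rw [h] <;> nlinarith

lemma condHingeRisk_of_mem_Icc (η : ℝ) {t : ℝ} (ht : t ∈ Icc (-1 : ℝ) 1) :
    condHingeRisk η t = 1 - (2 * η - 1) * t := by
  rw [condHingeRisk, hinge_of_le_one ht.2, hinge_of_le_one (by linarith [ht.1])]
  ring

lemma condHingeRisk_sgn (η : ℝ) : condHingeRisk η (sgn (2 * η - 1)) = 1 - |2 * η - 1| := by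
  rw [condHingeRisk_of_mem_Icc η (sgn_mem_Icc _), mul_sgn_self]

lemma condHingeRisk_sub_condHingeRisk_sgn (η : ℝ) {t : ℝ} (ht : t ∈ Icc (-1 : ℝ) 1) :
    condHingeRisk η t - condHingeRisk η (sgn (2 * η - 1)) =
      |2 * η - 1| * |t - sgn (2 * η - 1)| := by
  rw [condHingeRisk_of_mem_Icc η ht, condHingeRisk_of_mem_Icc η (sgn_mem_Icc _), ← mul_sgn_sub ht]
  ring

end condHingeRisk

lemma bayesPhi_le_riskPhi {d : ℕ} {φ : ℝ → ℝ} (hφ : ∀ t, 0 ≤ φ t)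
    (P : Measure ((Fin d → ℝ) × ℝ)) {g : (Fin d → ℝ) → ℝ} (hg : Measurable g) :
    bayesPhi φ P ≤ riskPhi φ P g :=
  ciInf_le ⟨0, forall_mem_range.2 fun _ => integral_nonneg fun _ => hφ _⟩
    (⟨g, hg⟩ : {g : (Fin d → ℝ) → ℝ // Measurable g})

lemma measurable_jointMeasure_kernel {d : ℕ} {η : (Fin d → ℝ) → ℝ} (hη : Measurable η) :
    Measurable fun x : Fin d → ℝ =>
      ENNReal.ofReal (η x) • Measure.dirac (x, (1 : ℝ)) +
        ENNReal.ofReal (1 - η x) • Measure.dirac (x, (-1 : ℝ)) := by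
  refine Measure.measurable_of_measurable_coe _ fun A hA => ?_
  simp only [Measure.coe_add, Pi.add_apply, Measure.smul_apply, smul_eq_mul,
    Measure.dirac_apply' _ hA]
  have hind (y : ℝ) :
      Measurable fun x : Fin d → ℝ => A.indicator (1 : (Fin d → ℝ) × ℝ → ℝ≥0∞) (x, y) :=
    (measurable_one.indicator hA).comp (measurable_id.prodMk measurable_const)
  exact (hη.ennreal_ofReal.mul (hind 1)).add
    ((measurable_const.sub hη).ennreal_ofReal.mul (hind (-1)))

lemma lintegral_jointMeasure {d : ℕ} {η : (Fin d → ℝ) → ℝ} (hη : Measurable η)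
    (Q : Measure (Fin d → ℝ)) {F : (Fin d → ℝ) × ℝ → ℝ≥0∞} (hF : Measurable F) :
    ∫⁻ p, F p ∂jointMeasure η Q =
      ∫⁻ x, ENNReal.ofReal (η x) * F (x, 1) + ENNReal.ofReal (1 - η x) * F (x, -1) ∂Q := by
  rw [jointMeasure,
    Measure.lintegral_bind (measurable_jointMeasure_kernel hη).aemeasurable hF.aemeasurable]
  refine lintegral_congr fun x => ?_
  rw [lintegral_add_measure, lintegral_smul_measure, lintegral_smul_measure,
    lintegral_dirac' _ hF, lintegral_dirac' _ hF, smul_eq_mul, smul_eq_mul]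

namespace DataDist

variable {d : ℕ} (D : DataDist d)

lemma measure_compl_cube : D.Q (cube d)ᶜ = 0 :=
  haveI := D.Q_prob
  (prob_compl_eq_zero_iff (MeasurableSet.univ_pi fun _ => measurableSet_Icc)).2 D.Q_cube

lemma integral_P {F : (Fin d → ℝ) × ℝ → ℝ} (hF : Measurable F) (hF₀ : 0 ≤ F) :
    ∫ p, F p ∂D.P = ∫ x, D.η x * F (x, 1) + (1 - D.η x) * F (x, -1) ∂D.Q := by
  have hη₀ x : 0 ≤ D.η x := (D.η_mem x).1
  have hη₁ x : 0 ≤ 1 - D.η x := by linarith [(D.η_mem x).2]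
  have hF' (y : ℝ) : Measurable fun x => F (x, y) :=
    hF.comp (measurable_id.prodMk measurable_const)
  rw [integral_eq_lintegral_of_nonneg_ae (ae_of_all _ hF₀) hF.aestronglyMeasurable,
    integral_eq_lintegral_of_nonneg_ae
      (ae_of_all _ fun x => add_nonneg (mul_nonneg (hη₀ x) (hF₀ _)) (mul_nonneg (hη₁ x) (hF₀ _)))
      ((D.η_meas.mul (hF' 1)).add
        ((measurable_const.sub D.η_meas).mul (hF' (-1)))).aestronglyMeasurable,
    DataDist.P, lintegral_jointMeasure D.η_meas D.Q hF.ennreal_ofReal]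
  congr 1
  refine lintegral_congr fun x => ?_
  rw [ENNReal.ofReal_add (mul_nonneg (hη₀ x) (hF₀ _)) (mul_nonneg (hη₁ x) (hF₀ _)),
    ENNReal.ofReal_mul (hη₀ x), ENNReal.ofReal_mul (hη₁ x)]

lemma riskPhi_hinge_eq {f : (Fin d → ℝ) → ℝ} (hf : Measurable f) :
    riskPhi hinge D.P f = ∫ x, condHingeRisk (D.η x) (f x) ∂D.Q := by
  have hF : Measurable fun p : (Fin d → ℝ) × ℝ => hinge (p.2 * f p.1) :=
    measurable_hinge.comp (measurable_snd.mul (hf.comp measurable_fst))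
  rw [riskPhi, D.integral_P hF fun _ => hinge_nonneg _]
  simp only [one_mul, neg_one_mul, condHingeRisk]

lemma integrable_condHingeRisk {f : (Fin d → ℝ) → ℝ} (hf : Measurable f) {B : ℝ}
    (hB : ∀ᵐ x ∂D.Q, |f x| ≤ B) : Integrable (fun x => condHingeRisk (D.η x) (f x)) D.Q := by
  have := D.Q_prob
  have hm : Measurable fun x => condHingeRisk (D.η x) (f x) :=
    (D.η_meas.mul (measurable_hinge.comp hf)).add
      ((measurable_const.sub D.η_meas).mul (measurable_hinge.comp hf.neg))
  refine .of_bound hm.aestronglyMeasurable (1 + B) (hB.mono fun x hx => ?_)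
  rw [Real.norm_of_nonneg (condHingeRisk_nonneg (D.η_mem x) _)]
  linarith [condHingeRisk_le (D.η_mem x) (f x)]

lemma riskPhi_hinge_sgn_le {g : (Fin d → ℝ) → ℝ} (hgm : Measurable g)
    (hg : ∀ᵐ x ∂D.Q, g x = sgn (2 * D.η x - 1)) {f : (Fin d → ℝ) → ℝ} (hf : Measurable f) {B : ℝ}
    (hB : ∀ x, |f x| ≤ B) : riskPhi hinge D.P g ≤ riskPhi hinge D.P f := by
  rw [D.riskPhi_hinge_eq hgm, D.riskPhi_hinge_eq hf]
  refine integral_mono_of_nonneg (ae_of_all _ fun x => condHingeRisk_nonneg (D.η_mem x) _)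
    (D.integrable_condHingeRisk hf (ae_of_all _ hB)) (hg.mono fun x hx => ?_)
  dsimp only
  rw [hx, condHingeRisk_sgn]
  exact one_sub_abs_le_condHingeRisk (D.η_mem x) _

lemma iInf_riskPhi_hinge_eq {g : (Fin d → ℝ) → ℝ} (hgm : Measurable g)
    (hg : ∀ᵐ x ∂D.Q, g x = sgn (2 * D.η x - 1)) (hgb : ∃ C : ℝ, ∀ x, |g x| ≤ C) :
    (⨅ f : {f : (Fin d → ℝ) → ℝ // Measurable f ∧ ∃ C : ℝ, ∀ x, |f x| ≤ C},
      riskPhi hinge D.P f.1) = riskPhi hinge D.P g := by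
  have hle (f : {f : (Fin d → ℝ) → ℝ // Measurable f ∧ ∃ C : ℝ, ∀ x, |f x| ≤ C}) :
      riskPhi hinge D.P g ≤ riskPhi hinge D.P f.1 :=
    D.riskPhi_hinge_sgn_le hgm hg f.2.1 f.2.2.choose_spec
  have : Nonempty {f : (Fin d → ℝ) → ℝ // Measurable f ∧ ∃ C : ℝ, ∀ x, |f x| ≤ C} :=
    ⟨⟨g, hgm, hgb⟩⟩
  exact le_antisymm (ciInf_le ⟨_, forall_mem_range.2 hle⟩ ⟨g, hgm, hgb⟩) (le_ciInf hle)

lemma integral_sq_hinge_sub {f g : (Fin d → ℝ) → ℝ} (hf : Measurable f)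
    (hf₁ : ∀ x, f x ∈ Icc (-1 : ℝ) 1) (hgm : Measurable g) (hg₁ : ∀ᵐ x ∂D.Q, g x ∈ Icc (-1 : ℝ) 1) :
    ∫ p, (hinge (p.2 * f p.1) - hinge (p.2 * g p.1)) ^ 2 ∂D.P = ∫ x, (f x - g x) ^ 2 ∂D.Q := by
  have hF : Measurable fun p : (Fin d → ℝ) × ℝ => (hinge (p.2 * f p.1) - hinge (p.2 * g p.1)) ^ 2 :=
    ((measurable_hinge.comp (measurable_snd.mul (hf.comp measurable_fst))).sub
      (measurable_hinge.comp (measurable_snd.mul (hgm.comp measurable_fst)))).pow_const 2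
  rw [D.integral_P hF fun _ => sq_nonneg _]
  refine integral_congr_ae (hg₁.mono fun x hx => ?_)
  simp only [one_mul, neg_one_mul, hinge_of_le_one (hf₁ x).2, hinge_of_le_one hx.2,
    hinge_of_le_one (neg_le.mpr (hf₁ x).1), hinge_of_le_one (neg_le.mpr hx.1)]
  ring

lemma riskPhi_hinge_sub_riskPhi_sgn {f g : (Fin d → ℝ) → ℝ} (hf : Measurable f)
    (hf₁ : ∀ x, f x ∈ Icc (-1 : ℝ) 1) (hgm : Measurable g)
    (hg : ∀ᵐ x ∂D.Q, g x = sgn (2 * D.η x - 1)) :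
    riskPhi hinge D.P f - riskPhi hinge D.P g = ∫ x, |2 * D.η x - 1| * |f x - g x| ∂D.Q := by
  have hg₁ : ∀ᵐ x ∂D.Q, |g x| ≤ 1 := hg.mono fun x hx => by rw [hx, abs_sgn]
  rw [D.riskPhi_hinge_eq hf, D.riskPhi_hinge_eq hgm,
    ← integral_sub (D.integrable_condHingeRisk hf (ae_of_all _ fun x => abs_le.2 (hf₁ x)))
      (D.integrable_condHingeRisk hgm hg₁)]
  refine integral_congr_ae (hg.mono fun x hx => ?_)
  dsimp only
  rw [hx]
  exact condHingeRisk_sub_condHingeRisk_sgn _ (hf₁ x)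

lemma integral_sq_sub_le {f g : (Fin d → ℝ) → ℝ} (hf : Measurable f)
    (hf₁ : ∀ x, f x ∈ Icc (-1 : ℝ) 1) (hgm : Measurable g) (hg₁ : ∀ᵐ x ∂D.Q, |g x| ≤ 1)
    {t : ℝ} (ht : 0 < t) :
    ∫ x, (f x - g x) ^ 2 ∂D.Q ≤ 4 * D.Q.real ({x | |2 * D.η x - 1| ≤ t} ∩ cube d) +
      2 / t * ∫ x, |2 * D.η x - 1| * |f x - g x| ∂D.Q := by
  have := D.Q_prob
  have hη := D.η_meas
  set S := {x | |2 * D.η x - 1| ≤ t}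
  have hS : MeasurableSet S := measurableSet_le (by fun_prop) measurable_const
  have hfg : ∀ᵐ x ∂D.Q, |f x - g x| ≤ 2 := hg₁.mono fun x hx =>
    (abs_sub _ _).trans (by linarith [abs_le.2 (hf₁ x)])
  have hint : Integrable (fun x => |2 * D.η x - 1| * |f x - g x|) D.Q := by
    refine .of_bound (by fun_prop) 2 (hfg.mono fun x hx => ?_)
    rw [Real.norm_of_nonneg (by positivity)]
    nlinarith [abs_two_mul_sub_one_le (D.η_mem x), abs_nonneg (2 * D.η x - 1)]
  rw [measureReal_def, measure_inter_conull D.measure_compl_cube, ← measureReal_def]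
  calc ∫ x, (f x - g x) ^ 2 ∂D.Q
      ≤ ∫ x, S.indicator (fun _ => (4 : ℝ)) x + 2 / t * (|2 * D.η x - 1| * |f x - g x|) ∂D.Q := by
        refine integral_mono_of_nonneg (ae_of_all _ fun _ => sq_nonneg _)
          (((integrable_const _).indicator hS).add (hint.const_mul _)) (hfg.mono fun x hx => ?_)
        simpa only [Set.indicator_apply, S, Set.mem_ofPred_eq]
          using sq_le_of_abs_le_two hx (abs_nonneg _) ht
    _ = 4 * D.Q.real S + 2 / t * ∫ x, |2 * D.η x - 1| * |f x - g x| ∂D.Q := by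
        rw [integral_add ((integrable_const _).indicator hS) (hint.const_mul _),
          integral_indicator_const _ hS, integral_const_mul, smul_eq_mul, mul_comm]

lemma measureReal_lowNoise_le {s : ℝ≥0∞} {α : ℝ} {τ : ℝ≥0∞} (hD : D ∈ Tsybakov d s α τ)
    (hα : 0 ≤ α) (hs : s ≠ ∞) {t : ℝ} (ht : 0 < t) (htτ : ENNReal.ofReal t ≤ τ) :
    D.Q.real ({x | |2 * D.η x - 1| ≤ t} ∩ cube d) ≤ α * t ^ s.toReal := by
  have h := hD t ht htτ
  rw [rpowE, if_neg hs, ENNReal.ofReal_rpow_of_pos ht, ← ENNReal.ofReal_mul hα] at h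
  exact ENNReal.toReal_le_of_le_ofReal (by positivity) h

lemma measure_lowNoise_eq_zero {α : ℝ} {τ : ℝ≥0∞} (hD : D ∈ Tsybakov d ∞ α τ) {t : ℝ}
    (ht : 0 < t) (htτ : ENNReal.ofReal t ≤ τ) (ht₁ : t < 1) :
    D.Q ({x | |2 * D.η x - 1| ≤ t} ∩ cube d) = 0 := by
  have h := hD t ht htτ
  rwa [rpowE, if_pos rfl, if_pos (ENNReal.ofReal_lt_one.mpr ht₁), mul_zero,
    nonpos_iff_eq_zero] at h

lemma integral_sq_sub_le_four {f g : (Fin d → ℝ) → ℝ} (hf₁ : ∀ x, f x ∈ Icc (-1 : ℝ) 1)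
    (hg₁ : ∀ᵐ x ∂D.Q, |g x| ≤ 1) : ∫ x, (f x - g x) ^ 2 ∂D.Q ≤ 4 := by
  have := D.Q_prob
  refine (integral_mono_of_nonneg (ae_of_all _ fun _ => sq_nonneg _) (integrable_const 4)
    (hg₁.mono fun x hx => ?_)).trans_eq (by simp)
  have := abs_le.2 (hf₁ x)
  rw [← sq_abs]
  nlinarith [abs_sub (f x) (g x), abs_nonneg (f x - g x)]

lemma integral_sq_sub_le_excessPhi_rpow {s : ℝ≥0∞} {α τ : ℝ}
    (hD : D ∈ Tsybakov d s α (ENNReal.ofReal τ)) (hα : 0 ≤ α) (hτ : 0 < τ)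
    {f g : (Fin d → ℝ) → ℝ} (hf : Measurable f) (hf₁ : ∀ x, f x ∈ Icc (-1 : ℝ) 1)
    (hgm : Measurable g) (hg : ∀ᵐ x ∂D.Q, g x = sgn (2 * D.η x - 1)) :
    ∫ x, (f x - g x) ^ 2 ∂D.Q ≤ 6 * max 1 (max α (1 / τ)) *
      excessPhi hinge D.P f ^ (if s = ∞ then (1 : ℝ) else s.toReal / (s.toReal + 1)) := by
  have hg₁ : ∀ᵐ x ∂D.Q, |g x| ≤ 1 := hg.mono fun x hx => by rw [hx, abs_sgn]
  set E := ∫ x, |2 * D.η x - 1| * |f x - g x| ∂D.Q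
  have hE : 0 ≤ E := integral_nonneg fun _ => by positivity
  have hE_le : E ≤ excessPhi hinge D.P f := by
    rw [excessPhi]
    linarith [D.riskPhi_hinge_sub_riskPhi_sgn hf hf₁ hgm hg,
      bayesPhi_le_riskPhi hinge_nonneg D.P hgm]
  have hkey t (ht : 0 < t) := D.integral_sq_sub_le hf hf₁ hgm hg₁ ht
  split_ifs with hs
  · subst hs
    calc ∫ x, (f x - g x) ^ 2 ∂D.Q ≤ 4 * max 1 (1 / τ) * E :=
          le_mul_of_forall_le_div hτ hE fun t ht htτ ht₁ => by
            simpa [measureReal_def, D.measure_lowNoise_eq_zero hD ht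
              (ENNReal.ofReal_le_ofReal htτ) ht₁] using hkey t ht
      _ ≤ 6 * max 1 (max α (1 / τ)) * excessPhi hinge D.P f ^ (1 : ℝ) := by
          rw [Real.rpow_one]
          gcongr
          · norm_num
          · exact le_max_right _ _
  · calc ∫ x, (f x - g x) ^ 2 ∂D.Q ≤ 6 * max 1 (max α (1 / τ)) * E ^ (s.toReal / (s.toReal + 1)) :=
          le_mul_rpow_of_forall_le_add hα hτ ENNReal.toReal_nonneg hE
            (D.integral_sq_sub_le_four hf₁ hg₁) fun t ht htτ => (hkey t ht).trans (by
              gcongr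
              exact D.measureReal_lowNoise_le hD hα hs ht (ENNReal.ofReal_le_ofReal htτ))
      _ ≤ _ := by gcongr

end DataDist

theorem statement_9_general
    (d : ℕ) (α τ : ℝ) (hα : 0 < α) (hτ : 0 < τ) (s : ℝ≥0∞)
    (D : DataDist d) (hD : D ∈ Tsybakov d s α (ENNReal.ofReal τ))
    (g : (Fin d → ℝ) → ℝ) (hgm : Measurable g) (hgb : ∃ C : ℝ, ∀ x, |g x| ≤ C)
    (hg : ∀ᵐ x ∂D.Q, g x = sgn (2 * D.η x - 1)) :
    ((⨅ f : {f : (Fin d → ℝ) → ℝ // Measurable f ∧ ∃ C : ℝ, ∀ x, |f x| ≤ C},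
        riskPhi hinge D.P f.1) = riskPhi hinge D.P g) ∧
      ∀ f : (Fin d → ℝ) → ℝ, Measurable f → (∀ x, f x ∈ Set.Icc (-1 : ℝ) 1) →
        ((∫ p, (hinge (p.2 * f p.1) - hinge (p.2 * g p.1)) ^ 2 ∂D.P) =
            ∫ x, (f x - g x) ^ 2 ∂D.Q) ∧
          (∫ x, (f x - g x) ^ 2 ∂D.Q) ≤
            6 * max 1 (max α (1 / τ)) *
              excessPhi hinge D.P f ^
                (if s = ∞ then (1 : ℝ) else s.toReal / (s.toReal + 1)) :=
  ⟨D.iInf_riskPhi_hinge_eq hgm hg hgb, fun f hf hf₁ =>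
    ⟨D.integral_sq_hinge_sub hf hf₁ hgm (hg.mono fun x hx => hx ▸ sgn_mem_Icc _),
      D.integral_sq_sub_le_excessPhi_rpow hD hα.le hτ hf hf₁ hgm hg⟩⟩

/-- Lemma 6.3 : hinge-loss calibration and variance bound. -/
theorem statement_9
    (d : ℕ) (hd : 0 < d) (α τ : ℝ) (hα : 0 < α) (hτ : 0 < τ) (s : ℝ≥0∞)
    (D : DataDist d) (hD : D ∈ Tsybakov d s α (ENNReal.ofReal τ))
    (g : (Fin d → ℝ) → ℝ) (hgm : Measurable g) (hgb : ∃ C : ℝ, ∀ x, |g x| ≤ C)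
    (hg : ∀ᵐ x ∂D.Q, g x = sgn (2 * D.η x - 1)) :
    ((⨅ f : {f : (Fin d → ℝ) → ℝ // Measurable f ∧ ∃ C : ℝ, ∀ x, |f x| ≤ C},
        riskPhi hinge D.P f.1) = riskPhi hinge D.P g) ∧
      ∀ f : (Fin d → ℝ) → ℝ, Measurable f → (∀ x, f x ∈ Set.Icc (-1 : ℝ) 1) →
        ((∫ p, (hinge (p.2 * f p.1) - hinge (p.2 * g p.1)) ^ 2 ∂D.P) =
            ∫ x, (f x - g x) ^ 2 ∂D.Q) ∧
          (∫ x, (f x - g x) ^ 2 ∂D.Q) ≤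
            6 * max 1 (max α (1 / τ)) *
              excessPhi hinge D.P f ^
                (if s = ∞ then (1 : ℝ) else s.toReal / (s.toReal + 1)) :=
  statement_9_general d α τ hα hτ s D hD g hgm hgb hg

end ZZS
end
end

section
/- Let d ∈ ℕ, β ∈ (0,∞), ρ ∈ (0,1/2), Q ∈ ℕ, and let G_{Q,d} := {(k_1/(2Q),…,k_d/(2Q)) : k_1,…,k_d odd integers} ∩ [0,1]^d. Let u : ℝ^d → ℝ be ⌈β−1⌉-times continuously differentiable with u(z) = 0 whenever ‖z‖_∞ ≥ ρ, let T : G_{Q,d} → [−1,1], and define f : ℝ^d → ℝ by f(x) := Σ_{a∈G_{Q,d}} Q^{−β}·T(a)·u(Q·(x−a)). Then f is ⌈β−1⌉-times continuously differentiable on ℝ^d and ‖f‖_{H^β(ℝ^d)} ≤ 3·‖u‖_{H^β(ℝ^d)}. -/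
open MeasureTheory ENNReal Set

noncomputable section

namespace ZZS

/-! Since `ρ < 1/2`, the rescaled bumps `x ↦ u (Q (x - a))` centred at different grid points `a`
have disjoint supports (their centres are `1/Q` apart in the sup norm, their supports have
radius `ρ/Q`), and so have all their partial derivatives. Hence at every point `D^v f` is a single
term `T(a) Q^{|v|-β} D^v u (Q (x - a))`, bounded by `sup |D^v u|` because `|v| < β` and `Q ≥ 1`.
For the Hölder quotient of `D^v f` at `x ≠ z` at most two bumps contribute, and each one
contributes at most `Q^{|v| - β + γ} [D^v u]_γ ‖x - z‖^γ ≤ [D^v u]_γ ‖x - z‖^γ`, where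
`γ = β + 1 - ⌈β⌉` and `|v| + γ ≤ β`. Thus `‖f‖ ≤ sup-part(u) + 2 · Hölder-part(u) ≤ 3 ‖u‖`. -/

section PartialDerivatives

variable {m : ℕ}

theorem length_idxList (v : Fin m → ℕ) : (idxList v).length = mord v := by
  simp [idxList, mord, List.length_flatMap, Fin.sum_univ_def]

theorem pderivList_eqOn_zero (l : List (Fin m)) {g : (Fin m → ℝ) → ℝ} {s : Set (Fin m → ℝ)}
    (hs : IsOpen s) (hg : EqOn g 0 s) : EqOn (pderivList l g) 0 s := by
  induction l generalizing g with
  | nil => exact hg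
  | cons i l ih =>
    refine ih fun x hx => ?_
    have : g =ᶠ[nhds x] fun _ => 0 := Filter.eventually_of_mem (hs.mem_nhds hx) hg
    simp [this.fderiv_eq]

theorem Dm_eq_zero_of_forall_le_norm {u : (Fin m → ℝ) → ℝ} {ρ : ℝ}
    (hu : ∀ z, ρ ≤ ‖z‖ → u z = 0) (v : Fin m → ℕ) {w : Fin m → ℝ} (hw : ρ < ‖w‖) :
    Dm v u w = 0 :=
  pderivList_eqOn_zero _ (isOpen_lt continuous_const continuous_norm) (fun z hz => hu z hz.le) hw

theorem pderivList_sum_mul_comp_affine {ι : Type*} [Fintype ι] (l : List (Fin m))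
    {g : (Fin m → ℝ) → ℝ} (hg : ContDiff ℝ l.length g) (a : ι → ℝ) (c : ℝ)
    (b : ι → Fin m → ℝ) :
    pderivList l (fun x => ∑ k, a k * g (c • x + b k)) =
      fun x => ∑ k, a k * c ^ l.length * pderivList l g (c • x + b k) := by
  induction l generalizing g a with
  | nil => simp [pderivList]
  | cons i l ih =>
    have hdiff : Differentiable ℝ g := hg.differentiable (by simp)
    have hg' : ContDiff ℝ l.length fun y => fderiv ℝ g y (Pi.single i 1) :=
      (hg.fderiv_right (m := l.length) (by simp)).clm_apply contDiff_const
    have hderiv : (fun x => fderiv ℝ (fun x => ∑ k, a k * g (c • x + b k)) x (Pi.single i 1)) =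
        fun x => ∑ k, (a k * c) * fderiv ℝ g (c • x + b k) (Pi.single i 1) := by
      funext x
      have hterm : ∀ k, HasFDerivAt (fun x => a k * g (c • x + b k))
          (a k • (fderiv ℝ g (c • x + b k)).comp (c • ContinuousLinearMap.id ℝ _)) x :=
        fun k => ((hdiff _).hasFDerivAt.comp x
          (((hasFDerivAt_id x).const_smul c).add_const (b k))).const_mul (a k)
      rw [(HasFDerivAt.fun_sum fun k _ => hterm k).fderiv]
      simp [mul_assoc]
    rw [pderivList, hderiv, ih hg' (fun k => a k * c)]
    funext x
    simp only [pderivList, List.length_cons, pow_succ]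
    exact Finset.sum_congr rfl fun k _ => by ring

theorem Dm_sum_mul_comp_affine {ι : Type*} [Fintype ι] (v : Fin m → ℕ)
    {g : (Fin m → ℝ) → ℝ} (hg : ContDiff ℝ (mord v) g) (a : ι → ℝ) (c : ℝ)
    (b : ι → Fin m → ℝ) :
    Dm v (fun x => ∑ k, a k * g (c • x + b k)) =
      fun x => ∑ k, a k * c ^ mord v * Dm v g (c • x + b k) := by
  rw [← length_idxList] at hg ⊢
  exact pderivList_sum_mul_comp_affine _ hg a c b

end PartialDerivatives

section EuclideanDistance

variable {m : ℕ}

theorem e2_eq_dist (x z : Fin m → ℝ) :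
    e2 x z = dist (WithLp.toLp 2 x) (WithLp.toLp 2 z) := by
  simp [e2, EuclideanSpace.dist_eq, Real.dist_eq, sq_abs]

theorem e2_pos {x z : Fin m → ℝ} (h : x ≠ z) : 0 < e2 x z := by
  rw [e2_eq_dist]
  exact dist_pos.mpr fun h' => h (WithLp.toLp_injective 2 h')

theorem e2_smul_add (c : ℝ) (b x z : Fin m → ℝ) :
    e2 (c • x + b) (c • z + b) = |c| * e2 x z := by
  simp [e2_eq_dist, WithLp.toLp_add, WithLp.toLp_smul, dist_smul₀]

end EuclideanDistance

section HolderNorm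

variable {m : ℕ} {β : ℝ} {S : Set (Fin m → ℝ)} {f : (Fin m → ℝ) → ℝ}

def holderExponent (β : ℝ) : ℝ := β + 1 - ⌈β⌉

def supNormOn (m : ℕ) (β : ℝ) (S : Set (Fin m → ℝ)) (f : (Fin m → ℝ) → ℝ) : ℝ≥0∞ :=
  ⨆ (v : Fin m → ℕ) (_ : (mord v : ℝ) < β) (x ∈ S), ENNReal.ofReal |Dm v f x|

def holderSeminormOn (m : ℕ) (β : ℝ) (S : Set (Fin m → ℝ)) (f : (Fin m → ℝ) → ℝ) : ℝ≥0∞ :=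
  ⨆ (v : Fin m → ℕ) (_ : (⌈β⌉ : ℝ) - 1 ≤ (mord v : ℝ) ∧ (mord v : ℝ) < β)
    (x ∈ S) (z ∈ S) (_ : x ≠ z),
    ENNReal.ofReal |Dm v f x - Dm v f z| / ENNReal.ofReal (e2 x z) ^ holderExponent β

theorem holderNormOn_eq_add :
    holderNormOn m β S f = supNormOn m β S f + holderSeminormOn m β S f := rfl

theorem holderExponent_pos (β : ℝ) : 0 < holderExponent β := by
  have := Int.ceil_lt_add_one β
  rw [holderExponent]
  linarith

theorem le_smoothOrder_of_lt {n : ℕ} (h : (n : ℝ) < β) : n ≤ smoothOrder β := by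
  have : (n : ℤ) < ⌈β⌉ := Int.lt_ceil.mpr (by exact_mod_cast h)
  have : (n : ℤ) ≤ ⌈β - 1⌉ := by rw [Int.ceil_sub_one]; omega
  rw [smoothOrder, ← Int.ceil_toNat]
  omega

theorem add_holderExponent_le {n : ℕ} (h : (n : ℝ) < β) : n + holderExponent β ≤ β := by
  have : (n : ℤ) + 1 ≤ ⌈β⌉ := Int.lt_ceil.mpr (by exact_mod_cast h)
  have : (n : ℝ) + 1 ≤ ⌈β⌉ := by exact_mod_cast this
  rw [holderExponent]
  linarith

theorem ofReal_abs_Dm_le_supNormOn {v : Fin m → ℕ} (hv : (mord v : ℝ) < β) {x : Fin m → ℝ}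
    (hx : x ∈ S) : ENNReal.ofReal |Dm v f x| ≤ supNormOn m β S f :=
  le_iSup₂_of_le v hv <| le_iSup₂_of_le x hx le_rfl

theorem ofReal_abs_Dm_sub_le_holderSeminormOn {v : Fin m → ℕ}
    (hv : (⌈β⌉ : ℝ) - 1 ≤ (mord v : ℝ) ∧ (mord v : ℝ) < β) {x z : Fin m → ℝ} (hx : x ∈ S)
    (hz : z ∈ S) (hxz : x ≠ z) :
    ENNReal.ofReal |Dm v f x - Dm v f z| ≤
      holderSeminormOn m β S f * ENNReal.ofReal (e2 x z) ^ holderExponent β := by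
  rw [← ENNReal.div_le_iff
    (ENNReal.rpow_pos (ENNReal.ofReal_pos.mpr (e2_pos hxz)) ENNReal.ofReal_ne_top).ne'
    (ENNReal.rpow_ne_top_of_nonneg (holderExponent_pos β).le ENNReal.ofReal_ne_top)]
  exact le_iSup₂_of_le v hv <| le_iSup₂_of_le x hx <| le_iSup₂_of_le z hz <|
    le_iSup_of_le hxz le_rfl

theorem supNormOn_le {A : ℝ≥0∞}
    (h : ∀ v : Fin m → ℕ, (mord v : ℝ) < β → ∀ x ∈ S, ENNReal.ofReal |Dm v f x| ≤ A) :
    supNormOn m β S f ≤ A :=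
  iSup₂_le fun v hv => iSup₂_le fun x hx => h v hv x hx

theorem holderSeminormOn_le {B : ℝ≥0∞}
    (h : ∀ v : Fin m → ℕ, (⌈β⌉ : ℝ) - 1 ≤ (mord v : ℝ) ∧ (mord v : ℝ) < β →
      ∀ x ∈ S, ∀ z ∈ S, x ≠ z →
      ENNReal.ofReal |Dm v f x - Dm v f z| ≤ B * ENNReal.ofReal (e2 x z) ^ holderExponent β) :
    holderSeminormOn m β S f ≤ B :=
  iSup₂_le fun v hv => iSup₂_le fun x hx => iSup₂_le fun z hz => iSup_le fun hxz =>
    ENNReal.div_le_of_le_mul (h v hv x hx z hz hxz)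

end HolderNorm

section FewNonzeroTerms

variable {ι α : Type*} [Fintype ι]

theorem ofReal_abs_sum_le_card_mul (a : ι → ℝ) {M : ℝ≥0∞} (h : ∀ k, ENNReal.ofReal |a k| ≤ M) :
    ENNReal.ofReal |∑ k, a k| ≤ (Finset.univ.filter fun k => a k ≠ 0).card * M := by
  rw [← Finset.sum_filter_ne_zero]
  calc ENNReal.ofReal |∑ k ∈ Finset.univ.filter fun k => a k ≠ 0, a k|
      ≤ ENNReal.ofReal (∑ k ∈ Finset.univ.filter fun k => a k ≠ 0, |a k|) :=
        ENNReal.ofReal_le_ofReal (Finset.abs_sum_le_sum_abs _ _)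
    _ = ∑ k ∈ Finset.univ.filter fun k => a k ≠ 0, ENNReal.ofReal |a k| :=
        ENNReal.ofReal_sum_of_nonneg fun k _ => abs_nonneg _
    _ ≤ _ := by simpa using Finset.sum_le_card_nsmul _ _ M fun k _ => h k

theorem card_filter_ne_zero_le_one {φ : ι → α → ℝ} (hφ : ∀ x, {k | φ k x ≠ 0}.Subsingleton)
    (x : α) : (Finset.univ.filter fun k => φ k x ≠ 0).card ≤ 1 :=
  Finset.card_le_one.mpr fun k hk j hj => hφ x (by simpa using hk) (by simpa using hj)

theorem ofReal_abs_sum_le_of_subsingleton {φ : ι → α → ℝ}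
    (hφ : ∀ x, {k | φ k x ≠ 0}.Subsingleton) {M : ℝ≥0∞} (x : α)
    (h : ∀ k, ENNReal.ofReal |φ k x| ≤ M) : ENNReal.ofReal |∑ k, φ k x| ≤ M :=
  have hcard : ((Finset.univ.filter fun k => φ k x ≠ 0).card : ℝ≥0∞) ≤ 1 := by
    exact_mod_cast card_filter_ne_zero_le_one hφ x
  (ofReal_abs_sum_le_card_mul _ h).trans (by simpa using mul_le_mul_left hcard M)

theorem ofReal_abs_sum_sub_sum_le_of_subsingleton {φ : ι → α → ℝ}
    (hφ : ∀ x, {k | φ k x ≠ 0}.Subsingleton) {M : ℝ≥0∞} (x z : α)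
    (h : ∀ k, ENNReal.ofReal |φ k x - φ k z| ≤ M) :
    ENNReal.ofReal |∑ k, φ k x - ∑ k, φ k z| ≤ 2 * M := by
  classical
  rw [← Finset.sum_sub_distrib]
  refine (ofReal_abs_sum_le_card_mul _ h).trans (mul_le_mul_left ?_ M)
  have hsub : (Finset.univ.filter fun k => φ k x - φ k z ≠ 0) ⊆
      (Finset.univ.filter fun k => φ k x ≠ 0) ∪ Finset.univ.filter fun k => φ k z ≠ 0 := by
    intro k
    simp only [Finset.mem_filter, Finset.mem_union, Finset.mem_univ, true_and]
    contrapose!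
    rintro ⟨hx, hz⟩
    simp [hx, hz]
  have := (Finset.card_le_card hsub).trans (Finset.card_union_le _ _)
  have := card_filter_ne_zero_le_one hφ x
  have := card_filter_ne_zero_le_one hφ z
  have hcard : (Finset.univ.filter fun k => φ k x - φ k z ≠ 0).card ≤ 2 := by omega
  exact_mod_cast hcard

end FewNonzeroTerms

theorem holderNormOn_le_of_sum_subsingleton {m : ℕ} {β : ℝ} {S : Set (Fin m → ℝ)}
    {f : (Fin m → ℝ) → ℝ} {ι : Type*} [Fintype ι] {φ : (Fin m → ℕ) → ι → (Fin m → ℝ) → ℝ}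
    {A B : ℝ≥0∞} (hf : ∀ v, (mord v : ℝ) < β → Dm v f = fun x => ∑ k, φ v k x)
    (hφ : ∀ v x, {k | φ v k x ≠ 0}.Subsingleton)
    (hA : ∀ v, (mord v : ℝ) < β → ∀ k, ∀ x ∈ S, ENNReal.ofReal |φ v k x| ≤ A)
    (hB : ∀ v, (⌈β⌉ : ℝ) - 1 ≤ (mord v : ℝ) ∧ (mord v : ℝ) < β → ∀ k, ∀ x ∈ S, ∀ z ∈ S, x ≠ z →
      ENNReal.ofReal |φ v k x - φ v k z| ≤ B * ENNReal.ofReal (e2 x z) ^ holderExponent β) :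
    holderNormOn m β S f ≤ A + 2 * B := by
  rw [holderNormOn_eq_add]
  gcongr
  · refine supNormOn_le fun v hv x hx => ?_
    rw [hf v hv]
    exact ofReal_abs_sum_le_of_subsingleton (hφ v) x fun k => hA v hv k x hx
  · refine holderSeminormOn_le fun v hv x hx z hz hxz => ?_
    rw [hf v hv.2, mul_assoc]
    exact ofReal_abs_sum_sub_sum_le_of_subsingleton (hφ v) x z fun k => hB v hv k x hx z hz hxz

section Rescaling

theorem abs_mul_rpow_le_one {t q e : ℝ} (ht : |t| ≤ 1) (hq : 1 ≤ q) (he : e ≤ 0) :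
    |t * q ^ e| ≤ 1 := by
  have hpos : 0 ≤ q ^ e := Real.rpow_nonneg (by linarith) e
  rw [abs_mul, abs_of_nonneg hpos]
  exact mul_le_one₀ ht hpos (Real.rpow_le_one_of_one_le_of_nonpos hq he)

theorem ofReal_abs_mul_comp_affine_sub_le {m : ℕ} {g : (Fin m → ℝ) → ℝ} {H : ℝ≥0∞} {γ : ℝ}
    (hγ : 0 ≤ γ)
    (hg : ∀ a b, a ≠ b → ENNReal.ofReal |g a - g b| ≤ H * ENNReal.ofReal (e2 a b) ^ γ)
    (t : ℝ) {c : ℝ} (hc : c ≠ 0) (b : Fin m → ℝ) {x z : Fin m → ℝ} (hxz : x ≠ z) :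
    ENNReal.ofReal |t * g (c • x + b) - t * g (c • z + b)| ≤
      ENNReal.ofReal (|t| * |c| ^ γ) * H * ENNReal.ofReal (e2 x z) ^ γ := by
  have hne : c • x + b ≠ c • z + b := fun h => hxz (smul_right_injective _ hc (add_right_cancel h))
  calc ENNReal.ofReal |t * g (c • x + b) - t * g (c • z + b)|
      = ENNReal.ofReal |t| * ENNReal.ofReal |g (c • x + b) - g (c • z + b)| := by
        rw [← mul_sub, abs_mul, ENNReal.ofReal_mul (abs_nonneg t)]
    _ ≤ ENNReal.ofReal |t| * (H * ENNReal.ofReal (|c| * e2 x z) ^ γ) := by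
        rw [← e2_smul_add]
        exact mul_le_mul_right (hg _ _ hne) _
    _ = ENNReal.ofReal (|t| * |c| ^ γ) * H * ENNReal.ofReal (e2 x z) ^ γ := by
        rw [ENNReal.ofReal_mul (abs_nonneg c), ENNReal.mul_rpow_of_nonneg _ _ hγ,
          ENNReal.ofReal_mul (abs_nonneg t), ENNReal.ofReal_rpow_of_nonneg (abs_nonneg c) hγ]
        ring

variable {m : ℕ} {β : ℝ} {u : (Fin m → ℝ) → ℝ} {t q : ℝ}

theorem ofReal_abs_rescaled_Dm_le (ht : |t| ≤ 1) (hq : 1 ≤ q) {v : Fin m → ℕ}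
    (hv : (mord v : ℝ) < β) (b x : Fin m → ℝ) :
    ENNReal.ofReal |t * q ^ ((mord v : ℝ) - β) * Dm v u (q • x + b)| ≤
      supNormOn m β univ u := by
  refine (ENNReal.ofReal_le_ofReal ?_).trans
    (ofReal_abs_Dm_le_supNormOn hv (mem_univ (q • x + b)))
  rw [abs_mul]
  exact mul_le_of_le_one_left (abs_nonneg _) (abs_mul_rpow_le_one ht hq (by linarith))

theorem ofReal_abs_rescaled_Dm_sub_le (ht : |t| ≤ 1) (hq : 1 ≤ q) {v : Fin m → ℕ}
    (hv : (⌈β⌉ : ℝ) - 1 ≤ (mord v : ℝ) ∧ (mord v : ℝ) < β) (b : Fin m → ℝ)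
    {x z : Fin m → ℝ} (hxz : x ≠ z) :
    ENNReal.ofReal |t * q ^ ((mord v : ℝ) - β) * Dm v u (q • x + b) -
        t * q ^ ((mord v : ℝ) - β) * Dm v u (q • z + b)| ≤
      holderSeminormOn m β univ u * ENNReal.ofReal (e2 x z) ^ holderExponent β := by
  have hq0 : 0 < q := by linarith
  have hcoef : |t * q ^ ((mord v : ℝ) - β)| * |q| ^ holderExponent β ≤ 1 :=
    calc |t * q ^ ((mord v : ℝ) - β)| * |q| ^ holderExponent β
        = |t * q ^ ((mord v : ℝ) - β + holderExponent β)| := by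
          rw [Real.rpow_add hq0, abs_of_pos hq0, abs_mul, abs_mul, abs_mul,
            abs_of_nonneg (by positivity : 0 ≤ q ^ holderExponent β)]
          ring
      _ ≤ 1 := abs_mul_rpow_le_one ht hq (by linarith [add_holderExponent_le hv.2])
  calc _ ≤ ENNReal.ofReal (|t * q ^ ((mord v : ℝ) - β)| * |q| ^ holderExponent β) *
          holderSeminormOn m β univ u * ENNReal.ofReal (e2 x z) ^ holderExponent β :=
        ofReal_abs_mul_comp_affine_sub_le (holderExponent_pos β).le
          (fun a b hab => ofReal_abs_Dm_sub_le_holderSeminormOn hv (mem_univ a) (mem_univ b) hab)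
          _ hq0.ne' _ hxz
    _ ≤ _ := by
        rw [mul_assoc]
        exact mul_le_of_le_one_left' (ENNReal.ofReal_le_one.mpr hcoef)

end Rescaling

section Bumps

variable {d Q : ℕ}

def bumpShift (k : Fin d → Fin Q) : Fin d → ℝ := fun i => -((2 * (k i : ℝ) + 1) / 2)

theorem mul_sub_gridPoint_eq_smul_add_bumpShift (hQ : (Q : ℝ) ≠ 0) (k : Fin d → Fin Q)
    (x : Fin d → ℝ) :
    (fun i => (Q : ℝ) * (x i - (2 * (k i : ℝ) + 1) / (2 * Q))) = (Q : ℝ) • x + bumpShift k := by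
  funext i
  simp only [bumpShift, Pi.add_apply, Pi.smul_apply, smul_eq_mul]
  field_simp
  ring

theorem one_le_norm_add_bumpShift_add {k j : Fin d → Fin Q} (hkj : k ≠ j) (w : Fin d → ℝ) :
    1 ≤ ‖w + bumpShift k‖ + ‖w + bumpShift j‖ := by
  obtain ⟨i, hi⟩ := Function.ne_iff.mp hkj
  have hint : (1 : ℝ) ≤ |(j i : ℝ) - k i| := by
    have : ((j i : ℕ) : ℤ) - (k i : ℕ) ≠ 0 := sub_ne_zero.mpr fun h => hi (by omega)
    exact_mod_cast Int.one_le_abs this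
  calc (1 : ℝ) ≤ |(j i : ℝ) - k i| := hint
    _ = ‖(w + bumpShift k - (w + bumpShift j)) i‖ := by
        simp only [bumpShift, Pi.sub_apply, Pi.add_apply, Real.norm_eq_abs]
        ring_nf
    _ ≤ ‖w + bumpShift k - (w + bumpShift j)‖ := norm_le_pi_norm _ i
    _ ≤ ‖w + bumpShift k‖ + ‖w + bumpShift j‖ := norm_sub_le _ _

theorem setOf_mul_comp_add_bumpShift_ne_zero_subsingleton {g : (Fin d → ℝ) → ℝ}
    (hg : ∀ w, 1 / 2 ≤ ‖w‖ → g w = 0) (a : (Fin d → Fin Q) → ℝ) (w : Fin d → ℝ) :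
    {k | a k * g (w + bumpShift k) ≠ 0}.Subsingleton := by
  have hnear : ∀ k ∈ {k | a k * g (w + bumpShift k) ≠ 0}, ‖w + bumpShift k‖ < 1 / 2 :=
    fun k hk => not_le.mp fun hfar => hk (by simp [hg _ hfar])
  intro k hk j hj
  by_contra hkj
  linarith [one_le_norm_add_bumpShift_add hkj w, hnear k hk, hnear j hj]

theorem Dm_sum_rescaled_bump {u : (Fin d → ℝ) → ℝ} {v : Fin d → ℕ} (hu : ContDiff ℝ (mord v) u)
    {q : ℝ} (hq : 0 < q) (β : ℝ) (T : (Fin d → Fin Q) → ℝ) :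
    Dm v (fun x => ∑ k, (q ^ (-β) * T k) * u (q • x + bumpShift k)) =
      fun x => ∑ k, T k * q ^ ((mord v : ℝ) - β) * Dm v u (q • x + bumpShift k) := by
  rw [Dm_sum_mul_comp_affine v hu]
  funext x
  refine Finset.sum_congr rfl fun k _ => ?_
  rw [Real.rpow_sub hq, Real.rpow_neg hq.le, Real.rpow_natCast]
  ring

end Bumps

theorem statement_12_general
    (d Q : ℕ) (hQ : 0 < Q) (β ρ : ℝ)
    (hρ : ρ ∈ Set.Ioo (0 : ℝ) (1 / 2))
    (u : (Fin d → ℝ) → ℝ) (hu : ContDiff ℝ (smoothOrder β : ℕ∞) u)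
    (hu0 : ∀ z : Fin d → ℝ, ρ ≤ ‖z‖ → u z = 0)
    (T : (Fin d → Fin Q) → ℝ) (hT : ∀ k, T k ∈ Set.Icc (-1 : ℝ) 1)
    (f : (Fin d → ℝ) → ℝ)
    (hf : ∀ x, f x = ∑ k : Fin d → Fin Q,
      (Q : ℝ) ^ (-β) * T k *
        u fun i => (Q : ℝ) * (x i - (2 * (k i : ℝ) + 1) / (2 * Q))) :
    ContDiff ℝ (smoothOrder β : ℕ∞) f ∧
      holderNormOn d β Set.univ f ≤ 3 * holderNormOn d β Set.univ u := by
  have hQpos : (0 : ℝ) < Q := by exact_mod_cast hQ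
  have hQ1 : (1 : ℝ) ≤ Q := by exact_mod_cast hQ
  have hTabs : ∀ k, |T k| ≤ 1 := fun k => abs_le.mpr (hT k)
  have hf' : f = fun x => ∑ k, ((Q : ℝ) ^ (-β) * T k) * u ((Q : ℝ) • x + bumpShift k) := by
    funext x
    simp only [hf x, mul_sub_gridPoint_eq_smul_add_bumpShift hQpos.ne']
  have hDf : ∀ v, (mord v : ℝ) < β → Dm v f = fun x =>
      ∑ k, T k * (Q : ℝ) ^ ((mord v : ℝ) - β) * Dm v u ((Q : ℝ) • x + bumpShift k) :=
    fun v hv => hf' ▸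
      Dm_sum_rescaled_bump (hu.of_le (by exact_mod_cast le_smoothOrder_of_lt hv)) hQpos β T
  have hsupp : ∀ v x, {k | T k * (Q : ℝ) ^ ((mord v : ℝ) - β) *
      Dm v u ((Q : ℝ) • x + bumpShift k) ≠ 0}.Subsingleton := fun v x =>
    setOf_mul_comp_add_bumpShift_ne_zero_subsingleton (g := Dm v u)
      (fun w hw => Dm_eq_zero_of_forall_le_norm hu0 v (w := w) (by linarith [hρ.2]))
      (fun k => T k * (Q : ℝ) ^ ((mord v : ℝ) - β)) ((Q : ℝ) • x)
  refine ⟨hf' ▸ ContDiff.sum fun k _ => contDiff_const.mul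
    (hu.comp ((contDiff_id.const_smul _).add contDiff_const)), ?_⟩
  calc holderNormOn d β univ f
      ≤ supNormOn d β univ u + 2 * holderSeminormOn d β univ u :=
        holderNormOn_le_of_sum_subsingleton hDf hsupp
          (fun v hv k x _ => ofReal_abs_rescaled_Dm_le (hTabs k) hQ1 hv _ _)
          (fun v hv k x _ z _ hxz => ofReal_abs_rescaled_Dm_sub_le (hTabs k) hQ1 hv _ hxz)
    _ ≤ 3 * holderNormOn d β univ u := by
        rw [holderNormOn_eq_add, mul_add]
        gcongr
        · exact le_mul_of_one_le_left' (by norm_num)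
        · norm_num

/-- Lemma 6.6 : Hölder norm of a sum of disjointly supported bumps. -/
theorem statement_12
    (d Q : ℕ) (hd : 0 < d) (hQ : 0 < Q) (β ρ : ℝ) (hβ : 0 < β)
    (hρ : ρ ∈ Set.Ioo (0 : ℝ) (1 / 2))
    (u : (Fin d → ℝ) → ℝ) (hu : ContDiff ℝ (smoothOrder β : ℕ∞) u)
    (hu0 : ∀ z : Fin d → ℝ, ρ ≤ ‖z‖ → u z = 0)
    (T : (Fin d → Fin Q) → ℝ) (hT : ∀ k, T k ∈ Set.Icc (-1 : ℝ) 1)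
    (f : (Fin d → ℝ) → ℝ)
    (hf : ∀ x, f x = ∑ k : Fin d → Fin Q,
      (Q : ℝ) ^ (-β) * T k *
        u fun i => (Q : ℝ) * (x i - (2 * (k i : ℝ) + 1) / (2 * Q))) :
    ContDiff ℝ (smoothOrder β : ℕ∞) f ∧
      holderNormOn d β Set.univ f ≤ 3 * holderNormOn d β Set.univ u :=
  statement_12_general d Q hQ β ρ hρ u hu hu0 T hT f hf

end ZZS
end
end

section
/- Define J : [0,1]² → ℝ by J(x,y) := min{x+y, 2−x−y} − min{x, 1−x} − min{y, 1−y}. Then: (i) J(x,y) = J(y,x) ≥ 0 for all x, y ∈ [0,1]; (ii) J(1/2−ε, 1/2+ε) = J(1/2+ε, 1/2−ε) = 2ε for all ε ∈ (0,1/2]; and (iii) for every d ∈ ℕ, every Borel probability measure Q on [0,1]^d, and all Borel measurable η_1, η_2 : [0,1]^d → [0,1], ∫ J(η_1(x), η_2(x)) dQ(x) ≤ inf over all measurable f : [0,1]^d → ℝ of (E_{P_{η_1,Q}}(f) + E_{P_{η_2,Q}}(f)). -/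
/-!
At a point where the label is `1` with probability `η`, a classifier with score `t` errs with
probability `r_t(η)`, equal to `1 - η` if `t ≥ 0` and to `η` otherwise, while the Bayes classifier
errs with probability `min η (1 - η)`. For a common score `t`, `r_t(a) + r_t(b)` is either
`2 - a - b` or `a + b`, hence at least `min (a + b) (2 - a - b)`; so `J(a, b)` is bounded by the
sum of the two pointwise excess risks, and integrating against `Q` bounds `∫ J(η₁, η₂) dQ` by
`E_{P₁}(f) + E_{P₂}(f)` for every measurable `f`.
-/

open MeasureTheory ENNReal Set

noncomputable section

namespace ZZS

/-- The function `J` of Lemma 6.9. -/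
def Jfun (x y : ℝ) : ℝ := min (x + y) (2 - x - y) - min x (1 - x) - min y (1 - y)

lemma Jfun_comm (x y : ℝ) : Jfun x y = Jfun y x := by
  rw [Jfun, Jfun, add_comm y x, show (2 : ℝ) - y - x = 2 - x - y by ring]
  ring

lemma Jfun_nonneg (x y : ℝ) : 0 ≤ Jfun x y := by
  have hle : min x (1 - x) + min y (1 - y) ≤ min (x + y) (2 - x - y) :=
    le_min (add_le_add (min_le_left _ _) (min_le_left _ _))
      (by linarith [min_le_right x (1 - x), min_le_right y (1 - y)])
  simp only [Jfun]
  linarith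

lemma Jfun_half_sub_half_add (ε : ℝ) : Jfun (1 / 2 - ε) (1 / 2 + ε) = 2 * |ε| := by
  have h₁ : min (1 / 2 - ε) (1 - (1 / 2 - ε)) = 1 / 2 - |ε| := by
    rcases abs_cases ε with ⟨h, -⟩ | ⟨h, -⟩ <;> rw [h] <;> grind
  have h₂ : min (1 / 2 + ε) (1 - (1 / 2 + ε)) = 1 / 2 - |ε| := by
    rcases abs_cases ε with ⟨h, -⟩ | ⟨h, -⟩ <;> rw [h] <;> grind
  rw [Jfun, h₁, h₂, show 1 / 2 - ε + (1 / 2 + ε) = 1 by ring,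
    show 2 - (1 / 2 - ε) - (1 / 2 + ε) = 1 by ring, min_self]
  ring

def pointwiseRisk01 (η t : ℝ) : ℝ := if 0 ≤ t then 1 - η else η

def pointwiseExcess01 (η t : ℝ) : ℝ := pointwiseRisk01 η t - min η (1 - η)

lemma Jfun_le_pointwiseExcess01_add (a b t : ℝ) :
    Jfun a b ≤ pointwiseExcess01 a t + pointwiseExcess01 b t := by
  have : min (a + b) (2 - a - b) ≤ pointwiseRisk01 a t + pointwiseRisk01 b t := by
    unfold pointwiseRisk01
    split_ifs
    · linarith [min_le_right (a + b) (2 - a - b)]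
    · exact min_le_left _ _
  simp only [Jfun, pointwiseExcess01]
  linarith

lemma pointwiseRisk01_mem_Icc {η : ℝ} (hη : η ∈ Icc (0 : ℝ) 1) (t : ℝ) :
    pointwiseRisk01 η t ∈ Icc (0 : ℝ) 1 := by
  obtain ⟨h₀, h₁⟩ := hη
  unfold pointwiseRisk01
  split_ifs <;> constructor <;> linarith

lemma min_self_one_sub_mem_Icc {η : ℝ} (hη : η ∈ Icc (0 : ℝ) 1) :
    min η (1 - η) ∈ Icc (0 : ℝ) 1 := by
  obtain ⟨h₀, h₁⟩ := hη
  exact ⟨le_min h₀ (by linarith), (min_le_left _ _).trans h₁⟩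

lemma measurable_pointwiseRisk01 {α : Type*} [MeasurableSpace α] {η f : α → ℝ}
    (hη : Measurable η) (hf : Measurable f) :
    Measurable fun x => pointwiseRisk01 (η x) (f x) :=
  Measurable.ite (measurableSet_le measurable_const hf) (measurable_const.sub hη) hη

section Integrability

variable {α : Type*} [MeasurableSpace α] {μ : Measure α} [IsFiniteMeasure μ] {η f : α → ℝ}

lemma integrable_of_mem_Icc {g : α → ℝ} (hg : Measurable g) (h : ∀ x, g x ∈ Icc (0 : ℝ) 1) :
    Integrable g μ :=
  .of_bound hg.aestronglyMeasurable 1 <| .of_forall fun x => by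
    rw [Real.norm_eq_abs, abs_le]
    exact ⟨by linarith [(h x).1], (h x).2⟩

lemma integrable_pointwiseRisk01 (hη : Measurable η) (hη01 : ∀ x, η x ∈ Icc (0 : ℝ) 1)
    (hf : Measurable f) : Integrable (fun x => pointwiseRisk01 (η x) (f x)) μ :=
  integrable_of_mem_Icc (measurable_pointwiseRisk01 hη hf)
    fun x => pointwiseRisk01_mem_Icc (hη01 x) _

lemma integrable_min_self_one_sub (hη : Measurable η) (hη01 : ∀ x, η x ∈ Icc (0 : ℝ) 1) :
    Integrable (fun x => min (η x) (1 - η x)) μ :=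
  integrable_of_mem_Icc (hη.min (measurable_const.sub hη))
    fun x => min_self_one_sub_mem_Icc (hη01 x)

lemma integrable_pointwiseExcess01 (hη : Measurable η) (hη01 : ∀ x, η x ∈ Icc (0 : ℝ) 1)
    (hf : Measurable f) : Integrable (fun x => pointwiseExcess01 (η x) (f x)) μ :=
  (integrable_pointwiseRisk01 hη hη01 hf).sub (integrable_min_self_one_sub hη hη01)

end Integrability

section JointMeasure

variable {d : ℕ} {Q : Measure (Fin d → ℝ)} {η f : (Fin d → ℝ) → ℝ}

lemma measurable_labelKernel (hη : Measurable η) :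
    Measurable fun x => ENNReal.ofReal (η x) • Measure.dirac (x, (1 : ℝ)) +
      ENNReal.ofReal (1 - η x) • Measure.dirac (x, (-1 : ℝ)) := by
  refine Measure.measurable_of_measurable_coe _ fun s hs => ?_
  simp only [Measure.coe_add, Pi.add_apply, Measure.smul_apply, smul_eq_mul,
    Measure.dirac_apply' _ hs]
  have hind : ∀ c : ℝ,
      Measurable fun x : Fin d → ℝ => s.indicator (1 : (Fin d → ℝ) × ℝ → ℝ≥0∞) (x, c) :=
    fun c => (measurable_one.indicator hs).comp (measurable_id.prodMk measurable_const)
  exact ((ENNReal.measurable_ofReal.comp hη).mul (hind 1)).add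
    ((ENNReal.measurable_ofReal.comp (measurable_const.sub hη)).mul (hind (-1)))

lemma risk01_jointMeasure (hη : Measurable η) (hη01 : ∀ x, η x ∈ Icc (0 : ℝ) 1)
    (hf : Measurable f) :
    risk01 (jointMeasure η Q) f = ∫ x, pointwiseRisk01 (η x) (f x) ∂Q := by
  have hS : MeasurableSet {p : (Fin d → ℝ) × ℝ | sgn (f p.1) ≠ p.2} := by
    have hsgn : Measurable fun p : (Fin d → ℝ) × ℝ => sgn (f p.1) :=
      Measurable.ite (measurableSet_le measurable_const (hf.comp measurable_fst))
        measurable_const measurable_const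
    exact (measurableSet_eq_fun hsgn measurable_snd).compl
  have hkernel : ∀ x, (ENNReal.ofReal (η x) • Measure.dirac (x, (1 : ℝ)) +
      ENNReal.ofReal (1 - η x) • Measure.dirac (x, (-1 : ℝ)))
        {p : (Fin d → ℝ) × ℝ | sgn (f p.1) ≠ p.2} =
      ENNReal.ofReal (pointwiseRisk01 (η x) (f x)) := by
    intro x
    simp only [Measure.coe_add, Pi.add_apply, Measure.smul_apply, smul_eq_mul,
      Measure.dirac_apply' _ hS, pointwiseRisk01]
    by_cases h : 0 ≤ f x <;> norm_num [sgn, h]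
  rw [risk01, jointMeasure, Measure.bind_apply hS (measurable_labelKernel hη).aemeasurable,
    lintegral_congr hkernel, integral_eq_lintegral_of_nonneg_ae
      (.of_forall fun x => (pointwiseRisk01_mem_Icc (hη01 x) _).1)
      (measurable_pointwiseRisk01 hη hf).aestronglyMeasurable]

/-- Witnessed by the plug-in classifier `η - 1/2`. -/
lemma bayes01_jointMeasure_le (hη : Measurable η) (hη01 : ∀ x, η x ∈ Icc (0 : ℝ) 1) :
    bayes01 (jointMeasure η Q) ≤ ∫ x, min (η x) (1 - η x) ∂Q := by
  have hbdd : BddBelow (range fun g : {g : (Fin d → ℝ) → ℝ // Measurable g} =>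
      risk01 (jointMeasure η Q) g.1) :=
    ⟨0, by rintro r ⟨g, rfl⟩; exact ENNReal.toReal_nonneg⟩
  calc bayes01 (jointMeasure η Q)
      ≤ risk01 (jointMeasure η Q) (fun x => η x - 1 / 2) :=
        ciInf_le hbdd ⟨_, hη.sub measurable_const⟩
    _ = ∫ x, min (η x) (1 - η x) ∂Q := by
        rw [risk01_jointMeasure (f := fun x => η x - 1 / 2) hη hη01 (hη.sub measurable_const)]
        refine integral_congr_ae (.of_forall fun x => ?_)
        simp only [pointwiseRisk01]
        split_ifs with h
        · rw [min_eq_right (by linarith)]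
        · rw [min_eq_left (by linarith)]

lemma integral_pointwiseExcess01_le_excess01 [IsFiniteMeasure Q] (hη : Measurable η)
    (hη01 : ∀ x, η x ∈ Icc (0 : ℝ) 1) (hf : Measurable f) :
    ∫ x, pointwiseExcess01 (η x) (f x) ∂Q ≤ excess01 (jointMeasure η Q) f := by
  simp only [pointwiseExcess01, excess01]
  rw [integral_sub (integrable_pointwiseRisk01 hη hη01 hf) (integrable_min_self_one_sub hη hη01),
    risk01_jointMeasure hη hη01 hf]
  linarith [bayes01_jointMeasure_le (Q := Q) hη hη01]

end JointMeasure

/-- Lemma 6.9. -/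
theorem statement_15 :
    (∀ x ∈ Set.Icc (0 : ℝ) 1, ∀ y ∈ Set.Icc (0 : ℝ) 1,
        Jfun x y = Jfun y x ∧ 0 ≤ Jfun x y) ∧
      (∀ ε : ℝ, ε ∈ Set.Ioc (0 : ℝ) (1 / 2) →
        Jfun (1 / 2 - ε) (1 / 2 + ε) = 2 * ε ∧ Jfun (1 / 2 + ε) (1 / 2 - ε) = 2 * ε) ∧
      ∀ (d : ℕ), 0 < d → ∀ Q : Measure (Fin d → ℝ), IsProbabilityMeasure Q →
        Q (cube d) = 1 →
        ∀ η₁ η₂ : (Fin d → ℝ) → ℝ, Measurable η₁ → Measurable η₂ →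
          (∀ x, η₁ x ∈ Set.Icc (0 : ℝ) 1) → (∀ x, η₂ x ∈ Set.Icc (0 : ℝ) 1) →
          (∫ x, Jfun (η₁ x) (η₂ x) ∂Q) ≤
            ⨅ f : {f : (Fin d → ℝ) → ℝ // Measurable f},
              (excess01 (jointMeasure η₁ Q) f.1 + excess01 (jointMeasure η₂ Q) f.1) := by
  refine ⟨fun x _ y _ => ⟨Jfun_comm x y, Jfun_nonneg x y⟩, ?_, ?_⟩
  · rintro ε ⟨hε, -⟩
    have h := Jfun_half_sub_half_add ε
    rw [abs_of_pos hε] at h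
    exact ⟨h, Jfun_comm _ _ ▸ h⟩
  · intro d _ Q _ _ η₁ η₂ hη₁ hη₂ hη₁01 hη₂01
    have : Nonempty {f : (Fin d → ℝ) → ℝ // Measurable f} := ⟨⟨0, measurable_const⟩⟩
    refine le_ciInf fun ⟨f, hf⟩ => ?_
    have hexcess₁ := integrable_pointwiseExcess01 (μ := Q) hη₁ hη₁01 hf
    have hexcess₂ := integrable_pointwiseExcess01 (μ := Q) hη₂ hη₂01 hf
    calc ∫ x, Jfun (η₁ x) (η₂ x) ∂Q
        ≤ ∫ x, pointwiseExcess01 (η₁ x) (f x) + pointwiseExcess01 (η₂ x) (f x) ∂Q :=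
          integral_mono_of_nonneg (.of_forall fun x => Jfun_nonneg _ _)
            (hexcess₁.add hexcess₂)
            (.of_forall fun x => Jfun_le_pointwiseExcess01_add _ _ _)
      _ = ∫ x, pointwiseExcess01 (η₁ x) (f x) ∂Q + ∫ x, pointwiseExcess01 (η₂ x) (f x) ∂Q :=
          integral_add hexcess₁ hexcess₂
      _ ≤ _ := add_le_add (integral_pointwiseExcess01_le_excess01 hη₁ hη₁01 hf)
          (integral_pointwiseExcess01_le_excess01 hη₂ hη₂01 hf)

end ZZS
end
end

section
/- Let d, n ∈ ℕ, let 𝓖 be a class of Borel probability measures on [0,1]^d × {−1,1}, let M ∈ ℕ with M ≥ 2, and let u, v ∈ (0,∞). Suppose P_0, P_1, …, P_M ∈ 𝓖 satisfy (1/M)·Σ_{j=1}^M KL(P_j ‖ P_0) ≤ u and inf over all measurable f : [0,1]^d → ℝ of (E_{P_i}(f) + E_{P_j}(f)) ≥ v for all distinct i, j ∈ {0,1,…,M}. Then inf_{f̂_n} sup_{P∈𝓖} E_{P^⊗n}[E_P(f̂_n)] ≥ (v/4)·(1 − (2·n·u + √(2·n·u))/log M), where the infimum is over all estimators based on an i.i.d.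 sample of size n from P. -/
open MeasureTheory ENNReal Set

noncomputable section

namespace ZZS

/-! At most one of the excess risks `excess01 (P i) (A ω)` can be below `v / 2`, so the sets
where they are form disjoint tests `S i`. Changing measure from `P 0` to `P j` on the event
where the log-likelihood ratio of the samples is below `log M` gives
`P_j^n(S j) ≤ (K + √K) / log M + M · P_0^n(S j)` with `K = n · KL(P j ‖ P 0)`, the `√K`
bounding the negative part of the log-likelihood ratio through the Hellinger affinity.
Summing over `j ≠ 0` and using disjointness, some `P_i^n((S i)ᶜ)` is at least
`(1 - (n u + √(n u)) / log M) / 2`, and Markov's inequality turns this into the risk bound. -/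

open InformationTheory

section KLDivergence

variable {α β : Type*} [MeasurableSpace α] [MeasurableSpace β]

lemma KL_eq_klDiv (μ ν : Measure α) [IsProbabilityMeasure μ] [IsProbabilityMeasure ν] :
    KL μ ν = klDiv μ ν := by
  by_cases h : μ ≪ ν ∧ Integrable (llr μ ν) μ
  · rw [KL, ← llr_def, if_pos h, klDiv_of_ac_of_integrable h.1 h.2]
    simp
  · rw [KL, ← llr_def, if_neg h, eq_comm, klDiv_eq_top_iff]
    exact fun hac hint => h ⟨hac, hint⟩

lemma klDiv_map_measurableEquiv (e : α ≃ᵐ β) (μ ν : Measure α)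
    [IsFiniteMeasure μ] [IsFiniteMeasure ν] :
    klDiv (μ.map e) (ν.map e) = klDiv μ ν := by
  refine le_antisymm (klDiv_map_le μ ν e.measurable) ?_
  simpa [Measure.map_map e.symm.measurable e.measurable] using
    klDiv_map_le (μ.map e) (ν.map e) e.symm.measurable

lemma klDiv_prod (μ₁ ν₁ : Measure α) (μ₂ ν₂ : Measure β) [IsProbabilityMeasure μ₁]
    [IsFiniteMeasure ν₁] [IsProbabilityMeasure μ₂] [IsProbabilityMeasure ν₂] :
    klDiv (μ₁.prod μ₂) (ν₁.prod ν₂) = klDiv μ₁ ν₁ + klDiv μ₂ ν₂ := by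
  rw [← Measure.compProd_const, ← Measure.compProd_const, klDiv_compProd_eq_add,
    Measure.compProd_const, Measure.compProd_const, ← Measure.prod_swap (μ := μ₂),
    ← Measure.prod_swap (μ := ν₂),
    show (Prod.swap : β × α → α × β) = MeasurableEquiv.prodComm from rfl,
    klDiv_map_measurableEquiv, ← Measure.compProd_const, ← Measure.compProd_const,
    klDiv_compProd_left]

end KLDivergence

section IID

variable {α : Type*} [MeasurableSpace α]

lemma piFinSuccAbove_last_symm_apply {n : ℕ} (x : α) (p : Fin n → α) :
    (MeasurableEquiv.piFinSuccAbove (fun _ => α) (Fin.last n)).symm (x, p) = Fin.snoc p x := by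
  simp [Fin.snocEquiv]

lemma measurable_map_snoc (μ : Measure α) [SFinite μ] (n : ℕ) :
    Measurable fun p : Fin n → α => μ.map fun x => (Fin.snoc p x : Fin (n + 1) → α) := by
  simp_rw [← piFinSuccAbove_last_symm_apply]
  set e := (MeasurableEquiv.piFinSuccAbove (fun _ => α) (Fin.last n)).symm
  refine Measure.measurable_of_measurable_coe _ fun s hs => ?_
  have hmeas : MeasurableSet {q : (Fin n → α) × α | e (q.2, q.1) ∈ s} :=
    (e.measurable.comp measurable_swap) hs
  have hmap : ∀ p : Fin n → α,
      (μ.map fun x => e (x, p)) s = μ (Prod.mk p ⁻¹' {q | e (q.2, q.1) ∈ s}) := fun p =>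
    Measure.map_apply (e.measurable.comp measurable_prodMk_right) hs
  simpa only [hmap] using measurable_measure_prodMk_left (ν := μ) hmeas

lemma iid_succ_eq_map_prod (μ : Measure α) [SFinite μ] (n : ℕ) [SFinite (iid μ n)] :
    iid μ (n + 1) =
      (μ.prod (iid μ n)).map (MeasurableEquiv.piFinSuccAbove (fun _ => α) (Fin.last n)).symm := by
  set e := (MeasurableEquiv.piFinSuccAbove (fun _ => α) (Fin.last n)).symm
  ext s hs
  rw [iid, Measure.bind_apply hs (measurable_map_snoc μ n).aemeasurable,
    Measure.map_apply e.measurable hs, Measure.prod_apply_symm (e.measurable hs)]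
  refine lintegral_congr fun p => ?_
  simp_rw [← piFinSuccAbove_last_symm_apply]
  exact Measure.map_apply (e.measurable.comp measurable_prodMk_right) hs

instance isProbabilityMeasure_iid (μ : Measure α) [IsProbabilityMeasure μ] (n : ℕ) :
    IsProbabilityMeasure (iid μ n) := by
  induction n with
  | zero => rw [iid]; infer_instance
  | succ n ih =>
    rw [iid_succ_eq_map_prod]
    exact Measure.isProbabilityMeasure_map (MeasurableEquiv.measurable _).aemeasurable

lemma klDiv_iid (μ ν : Measure α) [IsProbabilityMeasure μ] [IsProbabilityMeasure ν] (n : ℕ) :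
    klDiv (iid μ n) (iid ν n) = n * klDiv μ ν := by
  induction n with
  | zero => simp [iid]
  | succ n ih =>
    rw [iid_succ_eq_map_prod, iid_succ_eq_map_prod, klDiv_map_measurableEquiv, klDiv_prod, ih]
    push_cast
    ring

end IID

lemma two_mul_sub_two_mul_sqrt_le_mul_log {x : ℝ} (hx : 0 ≤ x) :
    2 * x - 2 * √x ≤ x * Real.log x := by
  rcases hx.eq_or_lt with rfl | hx
  · simp
  have hlog := Real.one_sub_inv_le_log_of_pos (Real.sqrt_pos.2 hx)
  rw [Real.log_sqrt hx.le] at hlog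
  have hsq : √x * √x = x := Real.mul_self_sqrt hx.le
  calc 2 * x - 2 * √x = 2 * x * (1 - (√x)⁻¹) := by field_simp; nlinarith
    _ ≤ 2 * x * (Real.log x / 2) := by gcongr
    _ = x * Real.log x := by ring

lemma mul_max_neg_log_le {x : ℝ} (hx : 0 ≤ x) :
    x * max (-Real.log x) 0 ≤ max (1 - x) 0 := by
  rcases hx.eq_or_lt with rfl | hx
  · simp
  rcases le_total 1 x with h1 | h1
  · simp [Real.log_nonneg h1]
  have hmul := mul_le_mul_of_nonneg_right (Real.one_sub_inv_le_log_of_pos hx) hx.le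
  rw [sub_mul, inv_mul_cancel₀ hx.ne'] at hmul
  rw [mul_comm, max_mul_of_nonneg _ _ hx.le, zero_mul]
  exact max_le_max (by linarith) le_rfl

lemma integral_mul_le_sqrt_mul_sqrt {α : Type*} [MeasurableSpace α] {μ : Measure α}
    {f g : α → ℝ} (hf : 0 ≤ᵐ[μ] f) (hg : 0 ≤ᵐ[μ] g) (hf2 : MemLp f 2 μ) (hg2 : MemLp g 2 μ) :
    ∫ x, f x * g x ∂μ ≤ √(∫ x, f x ^ 2 ∂μ) * √(∫ x, g x ^ 2 ∂μ) := by
  have h := integral_mul_le_Lp_mul_Lq_of_nonneg Real.HolderConjugate.two_two hf hg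
    (by simpa using hf2) (by simpa using hg2)
  simpa only [Real.sqrt_eq_rpow, one_div, Real.rpow_two] using h

section Hellinger

variable {α : Type*} [MeasurableSpace α] {μ : Measure α} {f : α → ℝ}

lemma memLp_two_sqrt (hf0 : ∀ x, 0 ≤ f x) (hfi : Integrable f μ) :
    MemLp (fun x => √(f x)) 2 μ := by
  have hsq : ∀ x, √(f x) ^ 2 = f x := fun x => Real.sq_sqrt (hf0 x)
  exact (memLp_two_iff_integrable_sq (Real.continuous_sqrt.comp_aestronglyMeasurable hfi.1)).2
    (by simpa only [hsq] using hfi)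

variable [IsProbabilityMeasure μ]

lemma two_sub_two_mul_integral_sqrt_le (hf0 : ∀ x, 0 ≤ f x) (hfi : Integrable f μ)
    (hf1 : ∫ x, f x ∂μ = 1) (hflog : Integrable (fun x => f x * Real.log (f x)) μ) :
    2 - 2 * ∫ x, √(f x) ∂μ ≤ ∫ x, f x * Real.log (f x) ∂μ := by
  have hsqrt : Integrable (fun x => 2 * √(f x)) μ :=
    ((memLp_two_sqrt hf0 hfi).integrable one_le_two).const_mul 2
  have hi : Integrable (fun x => 2 * f x - 2 * √(f x)) μ := (hfi.const_mul 2).sub hsqrt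
  have := integral_mono hi hflog fun x => two_mul_sub_two_mul_sqrt_le_mul_log (hf0 x)
  rwa [integral_sub (hfi.const_mul 2) hsqrt, integral_const_mul, integral_const_mul, hf1,
    mul_one] at this

-- Cauchy–Schwarz applied to `|1 - f| = |1 - √f| * (1 + √f)`.
lemma integral_abs_one_sub_le (hf0 : ∀ x, 0 ≤ f x) (hfi : Integrable f μ)
    (hf1 : ∫ x, f x ∂μ = 1) :
    ∫ x, |1 - f x| ∂μ ≤ 2 * √(2 - 2 * ∫ x, √(f x) ∂μ) := by
  set H := ∫ x, √(f x) ∂μ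
  have hsq : ∀ x, √(f x) ^ 2 = f x := fun x => Real.sq_sqrt (hf0 x)
  have hL2 := memLp_two_sqrt hf0 hfi
  have hsqrt : Integrable (fun x => 2 * √(f x)) μ := (hL2.integrable one_le_two).const_mul 2
  have hsub : ∫ x, |1 - √(f x)| ^ 2 ∂μ = 2 - 2 * H := by
    have hi : Integrable (fun x => 1 - 2 * √(f x)) μ := (integrable_const 1).sub hsqrt
    have : ∀ x, |1 - √(f x)| ^ 2 = 1 - 2 * √(f x) + f x := fun x => by
      rw [sq_abs]; linear_combination hsq x
    simp_rw [this]
    rw [integral_add hi hfi, integral_sub (integrable_const 1) hsqrt, integral_const_mul, hf1]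
    simp; ring
  have hadd : ∫ x, (1 + √(f x)) ^ 2 ∂μ = 2 + 2 * H := by
    have hi : Integrable (fun x => 1 + 2 * √(f x)) μ := (integrable_const 1).add hsqrt
    have : ∀ x, (1 + √(f x)) ^ 2 = 1 + 2 * √(f x) + f x := fun x => by
      linear_combination hsq x
    simp_rw [this]
    rw [integral_add hi hfi, integral_add (integrable_const 1) hsqrt, integral_const_mul, hf1]
    simp; ring
  have hH : H ≤ 1 := by
    have := integral_nonneg (μ := μ) (f := fun x => |1 - √(f x)| ^ 2) fun x => sq_nonneg _
    linarith
  have hfac : ∀ x, |1 - f x| = |1 - √(f x)| * (1 + √(f x)) := fun x => by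
    rw [show 1 - f x = (1 - √(f x)) * (1 + √(f x)) by linear_combination hsq x, abs_mul,
      abs_of_nonneg (by positivity : 0 ≤ 1 + √(f x))]
  have hL2sub' : MemLp (fun x => 1 - √(f x)) 2 μ := (memLp_const (1 : ℝ)).sub hL2
  have hL2sub : MemLp (fun x => |1 - √(f x)|) 2 μ := by
    simpa only [Real.norm_eq_abs] using hL2sub'.norm
  have hL2add : MemLp (fun x => 1 + √(f x)) 2 μ := (memLp_const (1 : ℝ)).add hL2
  have hcs := integral_mul_le_sqrt_mul_sqrt (ae_of_all _ fun x => abs_nonneg _)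
    (ae_of_all _ fun x => by positivity) hL2sub hL2add
  rw [hsub, hadd] at hcs
  simp_rw [hfac]
  have h2 : √(2 + 2 * H) ≤ 2 := Real.sqrt_le_iff.2 ⟨by norm_num, by nlinarith⟩
  nlinarith [Real.sqrt_nonneg (2 - 2 * H)]

lemma integral_max_one_sub_le_sqrt (hf0 : ∀ x, 0 ≤ f x) (hfi : Integrable f μ)
    (hf1 : ∫ x, f x ∂μ = 1) (hflog : Integrable (fun x => f x * Real.log (f x)) μ) :
    ∫ x, max (1 - f x) 0 ∂μ ≤ √(∫ x, f x * Real.log (f x) ∂μ) := by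
  have hhalf : ∫ x, |1 - f x| ∂μ = 2 * ∫ x, max (1 - f x) 0 ∂μ := by
    have hi : Integrable (fun x => 1 - f x) μ := (integrable_const 1).sub hfi
    have : ∀ x, |1 - f x| = 2 * max (1 - f x) 0 - (1 - f x) := fun x => by
      rcases le_total (1 - f x) 0 with h | h
      · rw [max_eq_right h, abs_of_nonpos h]; ring
      · rw [max_eq_left h, abs_of_nonneg h]; ring
    simp_rw [this]
    rw [integral_sub (hi.pos_part.const_mul 2) hi, integral_const_mul,
      integral_sub (integrable_const 1) hfi, hf1]
    simp
  linarith [integral_abs_one_sub_le hf0 hfi hf1,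
    Real.sqrt_le_sqrt (two_sub_two_mul_integral_sqrt_le hf0 hfi hf1 hflog)]

end Hellinger

section ChangeOfMeasure

variable {α : Type*} [MeasurableSpace α] {μ ν : Measure α}

lemma toReal_rnDeriv_le_exp_llr (μ ν : Measure α) (x : α) :
    (μ.rnDeriv ν x).toReal ≤ Real.exp (llr μ ν x) := by
  rcases (ENNReal.toReal_nonneg (a := μ.rnDeriv ν x)).eq_or_lt with h | h
  · rw [← h]; exact (Real.exp_pos _).le
  · rw [llr, Real.exp_log h]

lemma measureReal_inter_llr_lt_le [IsFiniteMeasure μ] [IsFiniteMeasure ν] (hac : ν ≪ μ)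
    {S : Set α} (hS : MeasurableSet S) (t : ℝ) :
    ν.real (S ∩ {x | llr ν μ x < t}) ≤ Real.exp t * μ.real S := by
  have hB : MeasurableSet (S ∩ {x | llr ν μ x < t}) :=
    hS.inter (measurableSet_lt (measurable_llr ν μ) measurable_const)
  rw [← Measure.setIntegral_toReal_rnDeriv hac]
  calc ∫ x in S ∩ {x | llr ν μ x < t}, (ν.rnDeriv μ x).toReal ∂μ
      ≤ ∫ x in S ∩ {x | llr ν μ x < t}, Real.exp t ∂μ :=
        setIntegral_mono_on Measure.integrable_toReal_rnDeriv.integrableOn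
          (integrableOn_const (measure_ne_top _ _)) hB fun x hx =>
            (toReal_rnDeriv_le_exp_llr ν μ x).trans (Real.exp_le_exp.2 hx.2.le)
    _ = Real.exp t * μ.real (S ∩ {x | llr ν μ x < t}) := by
        rw [setIntegral_const, smul_eq_mul, mul_comm]
    _ ≤ Real.exp t * μ.real S :=
        mul_le_mul_of_nonneg_left (measureReal_mono inter_subset_left) (Real.exp_pos t).le

variable [IsProbabilityMeasure μ] [IsProbabilityMeasure ν]

lemma integral_max_neg_llr_le (hac : ν ≪ μ) (hint : Integrable (llr ν μ) ν) :
    ∫ x, max (-llr ν μ x) 0 ∂ν ≤ √(∫ x, llr ν μ x ∂ν) := by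
  have hρ1 : ∫ x, (ν.rnDeriv μ x).toReal ∂μ = 1 := by
    rw [Measure.integral_toReal_rnDeriv hac, probReal_univ]
  have hlhs : Integrable (fun x => (ν.rnDeriv μ x).toReal * max (-llr ν μ x) 0) μ :=
    (integrable_toReal_rnDeriv_mul_iff hac).2 hint.neg.pos_part
  have hrhs : Integrable (fun x => max (1 - (ν.rnDeriv μ x).toReal) 0) μ :=
    ((integrable_const 1).sub Measure.integrable_toReal_rnDeriv).pos_part
  rw [← integral_toReal_rnDeriv_mul hac, ← integral_rnDeriv_mul_log hac]
  exact (integral_mono hlhs hrhs fun x => mul_max_neg_log_le ENNReal.toReal_nonneg).trans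
    (integral_max_one_sub_le_sqrt (fun x => ENNReal.toReal_nonneg)
      Measure.integrable_toReal_rnDeriv hρ1 ((integrable_rnDeriv_mul_log_iff hac).2 hint))

lemma integral_max_llr_le (hac : ν ≪ μ) (hint : Integrable (llr ν μ) ν) :
    ∫ x, max (llr ν μ x) 0 ∂ν ≤ ∫ x, llr ν μ x ∂ν + √(∫ x, llr ν μ x ∂ν) := by
  have : ∀ x, max (llr ν μ x) 0 = llr ν μ x + max (-llr ν μ x) 0 := fun x => by
    rcases le_total (llr ν μ x) 0 with h | h
    · rw [max_eq_right h, max_eq_left (by linarith)]; ring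
    · rw [max_eq_left h, max_eq_right (by linarith)]; ring
  have hneg : Integrable (fun x => max (-llr ν μ x) 0) ν := hint.neg.pos_part
  simp_rw [this]
  rw [integral_add hint hneg]
  linarith [integral_max_neg_llr_le hac hint]

lemma measureReal_le_of_integrable_llr (hac : ν ≪ μ) (hint : Integrable (llr ν μ) ν)
    {S : Set α} (hS : MeasurableSet S) {t : ℝ} (ht : 0 < t) :
    ν.real S ≤ (∫ x, llr ν μ x ∂ν + √(∫ x, llr ν μ x ∂ν)) / t + Real.exp t * μ.real S := by
  have hmarkov : t * ν.real {x | t ≤ llr ν μ x} ≤ ∫ x, max (llr ν μ x) 0 ∂ν :=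
    calc t * ν.real {x | t ≤ llr ν μ x} ≤ t * ν.real {x | t ≤ max (llr ν μ x) 0} :=
          mul_le_mul_of_nonneg_left
            (measureReal_mono fun x (hx : t ≤ llr ν μ x) => le_max_of_le_left hx) ht.le
      _ ≤ _ := mul_meas_ge_le_integral_of_nonneg (ae_of_all _ fun x => le_max_right _ _)
          hint.pos_part t
  have hlarge : ν.real {x | t ≤ llr ν μ x} ≤ (∫ x, llr ν μ x ∂ν + √(∫ x, llr ν μ x ∂ν)) / t := by
    rw [le_div_iff₀ ht, mul_comm]
    exact hmarkov.trans (integral_max_llr_le hac hint)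
  calc ν.real S ≤ ν.real ({x | t ≤ llr ν μ x} ∪ (S ∩ {x | llr ν μ x < t})) :=
        measureReal_mono fun x hx => (le_or_gt t (llr ν μ x)).imp id fun h => ⟨hx, h⟩
    _ ≤ _ := measureReal_union_le _ _
    _ ≤ _ := add_le_add hlarge (measureReal_inter_llr_lt_le hac hS t)

lemma measureReal_le_of_klDiv_ne_top (h : klDiv ν μ ≠ ∞) {S : Set α} (hS : MeasurableSet S)
    {t : ℝ} (ht : 0 < t) :
    ν.real S ≤ ((klDiv ν μ).toReal + √(klDiv ν μ).toReal) / t + Real.exp t * μ.real S := by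
  obtain ⟨hac, hint⟩ := klDiv_ne_top_iff.1 h
  rw [toReal_klDiv_of_measure_eq hac (by simp)]
  exact measureReal_le_of_integrable_llr hac hint hS ht

end ChangeOfMeasure

section Testing

variable {Ω : Type*} [MeasurableSpace Ω] {M : ℕ} (Q : Fin (M + 1) → Measure Ω)
  [∀ i, IsProbabilityMeasure (Q i)] {S : Fin (M + 1) → Set Ω}

lemma exists_measureReal_compl_ge (hM : 0 < M) (hS : ∀ i, MeasurableSet (S i))
    (hdisj : Pairwise fun i j => Disjoint (S i) (S j)) (b : Fin (M + 1) → ℝ)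
    (hb : ∀ j ≠ 0, (Q j).real (S j) ≤ b j + M * (Q 0).real (S j)) :
    ∃ i, 1 - (∑ j ∈ Finset.univ.erase 0, b j) / M ≤ 2 * (Q i).real (S i)ᶜ := by
  obtain ⟨i, -, hi⟩ := Finset.exists_max_image Finset.univ (fun i => (Q i).real (S i)ᶜ)
    Finset.univ_nonempty
  refine ⟨i, ?_⟩
  have hcard : (Finset.univ.erase (0 : Fin (M + 1))).card = M := by simp
  have hrest : ∑ j ∈ Finset.univ.erase 0, (Q 0).real (S j) ≤ (Q 0).real (S 0)ᶜ := by
    rw [← measureReal_biUnion_finset (fun j _ k _ hjk => hdisj hjk) fun j _ => hS j]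
    refine measureReal_mono fun x hx => ?_
    simp only [Set.mem_iUnion, Finset.mem_erase] at hx
    obtain ⟨j, ⟨hj, -⟩, hxj⟩ := hx
    exact fun hx0 => (hdisj hj).le_bot ⟨hxj, hx0⟩
  have key : (M : ℝ) * (1 - (Q i).real (S i)ᶜ) ≤
      ∑ j ∈ Finset.univ.erase 0, b j + M * (Q i).real (S i)ᶜ := by
    calc (M : ℝ) * (1 - (Q i).real (S i)ᶜ)
        = ∑ j ∈ Finset.univ.erase (0 : Fin (M + 1)), (1 - (Q i).real (S i)ᶜ) := by
          rw [Finset.sum_const, hcard, nsmul_eq_mul]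
      _ ≤ ∑ j ∈ Finset.univ.erase 0, (Q j).real (S j) := by
        refine Finset.sum_le_sum fun j _ => ?_
        linarith [hi j (Finset.mem_univ j), probReal_compl_eq_one_sub (μ := Q j) (hS j)]
      _ ≤ ∑ j ∈ Finset.univ.erase 0, (b j + M * (Q 0).real (S j)) :=
        Finset.sum_le_sum fun j hj => hb j (Finset.ne_of_mem_erase hj)
      _ ≤ ∑ j ∈ Finset.univ.erase 0, b j + M * (Q i).real (S i)ᶜ := by
        rw [Finset.sum_add_distrib, ← Finset.mul_sum]
        gcongr
        exact hrest.trans (hi 0 (Finset.mem_univ 0))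
  have hM' : (0 : ℝ) < M := by exact_mod_cast hM
  have : 1 - 2 * (Q i).real (S i)ᶜ ≤ (∑ j ∈ Finset.univ.erase 0, b j) / M := by
    rw [le_div_iff₀ hM']
    linarith
  linarith

lemma exists_measureReal_compl_ge_of_sum_klDiv_le (hM : 2 ≤ M) {κ : ℝ}
    (hfin : ∀ j ≠ 0, klDiv (Q j) (Q 0) ≠ ∞)
    (hκ : ∑ j ∈ Finset.univ.erase 0, (klDiv (Q j) (Q 0)).toReal ≤ M * κ)
    (hS : ∀ i, MeasurableSet (S i)) (hdisj : Pairwise fun i j => Disjoint (S i) (S j)) :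
    ∃ i, 1 - (κ + √κ) / Real.log M ≤ 2 * (Q i).real (S i)ᶜ := by
  have hM0 : (0 : ℝ) < M := by positivity
  have hlog : 0 < Real.log M := Real.log_pos (by exact_mod_cast hM)
  set K := fun j => (klDiv (Q j) (Q 0)).toReal
  obtain ⟨i, hi⟩ := exists_measureReal_compl_ge Q (by omega) hS hdisj
    (fun j => (K j + √(K j)) / Real.log M) fun j hj => by
      simpa [Real.exp_log hM0] using measureReal_le_of_klDiv_ne_top (hfin j hj) (hS j) hlog
  refine ⟨i, le_trans ?_ hi⟩
  have hsqrt : ∑ j ∈ Finset.univ.erase (0 : Fin (M + 1)), √(K j) ≤ M * √κ := by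
    have h := Real.sum_sqrt_mul_sqrt_le (Finset.univ.erase (0 : Fin (M + 1)))
      (fun j => ENNReal.toReal_nonneg (a := klDiv (Q j) (Q 0))) fun _ => zero_le_one
    simp only [Real.sqrt_one, mul_one, Finset.sum_const, Finset.card_erase_of_mem
      (Finset.mem_univ _), Finset.card_univ, Fintype.card_fin, add_tsub_cancel_right,
      nsmul_eq_mul] at h
    calc ∑ j ∈ Finset.univ.erase 0, √(K j) ≤ √(M * κ) * √M :=
          h.trans (by gcongr)
      _ = M * √κ := by
          rw [Real.sqrt_mul hM0.le, mul_comm, ← mul_assoc, Real.mul_self_sqrt hM0.le]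
  have hsum : ∑ j ∈ Finset.univ.erase 0, (K j + √(K j)) ≤ M * (κ + √κ) := by
    rw [Finset.sum_add_distrib]
    linarith
  rw [← Finset.sum_div, div_div, mul_comm, ← div_div]
  gcongr
  rwa [div_le_iff₀ hM0, mul_comm]

end Testing

section Risk

variable {d : ℕ} (P : Measure ((Fin d → ℝ) × ℝ))

lemma measurable_sgn : Measurable sgn :=
  Measurable.ite measurableSet_Ici measurable_const measurable_const

lemma risk01_le_one [IsProbabilityMeasure P] (f : (Fin d → ℝ) → ℝ) : risk01 P f ≤ 1 :=
  (measureReal_mono (subset_univ _)).trans_eq probReal_univ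

lemma bayes01_nonneg : 0 ≤ bayes01 P := Real.iInf_nonneg fun _ => ENNReal.toReal_nonneg

lemma bayes01_le_risk01 {f : (Fin d → ℝ) → ℝ} (hf : Measurable f) : bayes01 P ≤ risk01 P f :=
  ciInf_le ⟨0, by rintro _ ⟨g, rfl⟩; exact ENNReal.toReal_nonneg⟩ (⟨f, hf⟩ : {g // Measurable g})

lemma excess01_nonneg {f : (Fin d → ℝ) → ℝ} (hf : Measurable f) : 0 ≤ excess01 P f :=
  sub_nonneg.2 (bayes01_le_risk01 P hf)

lemma abs_excess01_le_one [IsProbabilityMeasure P] (f : (Fin d → ℝ) → ℝ) :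
    |excess01 P f| ≤ 1 := by
  have h0 := bayes01_nonneg P
  have h1 := (bayes01_le_risk01 P (measurable_const (a := (0 : ℝ)))).trans (risk01_le_one P _)
  have h2 := risk01_le_one P f
  have h3 : 0 ≤ risk01 P f := ENNReal.toReal_nonneg
  rw [excess01, abs_le]
  constructor <;> linarith

lemma integral_excess01_le_one [IsProbabilityMeasure P] {Ω : Type*} [MeasurableSpace Ω]
    (μ : Measure Ω) [IsProbabilityMeasure μ] (F : Ω → (Fin d → ℝ) → ℝ) :
    ∫ ω, excess01 P (F ω) ∂μ ≤ 1 := by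
  refine (le_abs_self _).trans ?_
  simpa using norm_integral_le_of_norm_le_const (μ := μ) (C := 1)
    (ae_of_all _ fun ω => (Real.norm_eq_abs _).trans_le (abs_excess01_le_one P (F ω)))

lemma Estimator.Meas.measurable_excess01 {n : ℕ} {A : Estimator d n} (hA : A.Meas) [SFinite P] :
    Measurable fun ω => excess01 P (A ω) := by
  have hT : MeasurableSet {q : (Fin n → (Fin d → ℝ) × ℝ) × ((Fin d → ℝ) × ℝ) |
      sgn (A q.1 q.2.1) ≠ q.2.2} :=
    (measurableSet_eq_fun (measurable_sgn.comp (hA.comp (measurable_fst.prodMk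
      (measurable_fst.comp measurable_snd)))) (measurable_snd.comp measurable_snd)).compl
  exact (measurable_measure_prodMk_left hT).ennreal_toReal.sub_const _

end Risk

lemma sum_toReal_le_of_inv_mul_sum_le {ι : Type*} {s : Finset ι} {x : ι → ℝ≥0∞}
    {M : ℕ} (hM : M ≠ 0) {u : ℝ} (hu : 0 ≤ u)
    (h : (M : ℝ≥0∞)⁻¹ * ∑ i ∈ s, x i ≤ ENNReal.ofReal u) :
    (∀ i ∈ s, x i ≠ ∞) ∧ ∑ i ∈ s, (x i).toReal ≤ M * u := by
  rw [ENNReal.inv_mul_le_iff (by exact_mod_cast hM) (natCast_ne_top M)] at h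
  have hfin : ∀ i ∈ s, x i ≠ ∞ :=
    ENNReal.sum_ne_top.1 (ne_top_of_le_ne_top (mul_ne_top (natCast_ne_top M) ofReal_ne_top) h)
  refine ⟨hfin, ?_⟩
  rw [← ENNReal.toReal_sum hfin]
  simpa [toReal_ofReal hu] using
    ENNReal.toReal_mono (mul_ne_top (natCast_ne_top M) ofReal_ne_top) h

lemma exists_le_integral_excess01 {d n M : ℕ} (hM : 2 ≤ M)
    (P : Fin (M + 1) → Measure ((Fin d → ℝ) × ℝ)) [∀ i, IsProbabilityMeasure (P i)] {κ v : ℝ}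
    (hv : 0 ≤ v) (hfin : ∀ j ≠ 0, klDiv (P j) (P 0) ≠ ∞)
    (hκ : ∑ j ∈ Finset.univ.erase 0, (klDiv (P j) (P 0)).toReal ≤ M * κ)
    (hsep : ∀ i j : Fin (M + 1), i ≠ j →
      ∀ f : (Fin d → ℝ) → ℝ, Measurable f → v ≤ excess01 (P i) f + excess01 (P j) f)
    {A : Estimator d n} (hA : A.Meas) :
    ∃ i, v / 4 * (1 - (n * κ + √(n * κ)) / Real.log M) ≤
      ∫ ω, excess01 (P i) (A ω) ∂iid (P i) n := by
  have hslice : ∀ ω, Measurable (A ω) := fun ω => hA.comp measurable_prodMk_left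
  set S := fun i => {ω | excess01 (P i) (A ω) < v / 2}
  have hS : ∀ i, MeasurableSet (S i) := fun i =>
    measurableSet_lt (hA.measurable_excess01 _) measurable_const
  have hdisj : Pairwise fun i j => Disjoint (S i) (S j) := fun i j hij =>
    Set.disjoint_left.2 fun ω (hi : _ < v / 2) (hj : _ < v / 2) => by
      linarith [hsep i j hij (A ω) (hslice ω)]
  have hnκ : ∑ j ∈ Finset.univ.erase 0, (klDiv (iid (P j) n) (iid (P 0) n)).toReal ≤
      M * (n * κ) := by
    simp_rw [klDiv_iid, toReal_mul, toReal_natCast, ← Finset.mul_sum]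
    nlinarith [Nat.cast_nonneg (α := ℝ) n]
  obtain ⟨i, hi⟩ := exists_measureReal_compl_ge_of_sum_klDiv_le (fun i => iid (P i) n) hM
    (fun j hj => by rw [klDiv_iid]; exact mul_ne_top (natCast_ne_top n) (hfin j hj)) hnκ hS hdisj
  refine ⟨i, ?_⟩
  have hint : Integrable (fun ω => excess01 (P i) (A ω)) (iid (P i) n) :=
    Integrable.of_bound (hA.measurable_excess01 _).aestronglyMeasurable 1
      (ae_of_all _ fun ω => (Real.norm_eq_abs _).trans_le (abs_excess01_le_one _ _))
  have hcompl : (S i)ᶜ = {ω | v / 2 ≤ excess01 (P i) (A ω)} := by ext; simp [S]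
  calc v / 4 * (1 - (n * κ + √(n * κ)) / Real.log M)
      ≤ v / 4 * (2 * (iid (P i) n).real (S i)ᶜ) := by gcongr
    _ = v / 2 * (iid (P i) n).real {ω | v / 2 ≤ excess01 (P i) (A ω)} := by rw [hcompl]; ring
    _ ≤ _ := mul_meas_ge_le_integral_of_nonneg
        (ae_of_all _ fun ω => excess01_nonneg _ (hslice ω)) hint _

theorem statement_17_general
    (d n M : ℕ) (hM : 2 ≤ M)
    (𝓖 : Set (Measure ((Fin d → ℝ) × ℝ)))
    (h𝓖 : ∀ P ∈ 𝓖, IsProbabilityMeasure P ∧ P (cube d ×ˢ labels) = 1)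
    (u v : ℝ) (hu : 0 < u) (hv : 0 < v)
    (P : Fin (M + 1) → Measure ((Fin d → ℝ) × ℝ)) (hPG : ∀ j, P j ∈ 𝓖)
    (hKL : (M : ℝ≥0∞)⁻¹ * ∑ j ∈ Finset.univ.erase (0 : Fin (M + 1)), KL (P j) (P 0) ≤
      ENNReal.ofReal u)
    (hsep : ∀ i j : Fin (M + 1), i ≠ j →
      ∀ f : (Fin d → ℝ) → ℝ, Measurable f → v ≤ excess01 (P i) f + excess01 (P j) f) :
    (⨅ A : {A : Estimator d n // A.Meas},
        ⨆ Q : 𝓖, ∫ ω, excess01 Q.1 (A.1 ω) ∂iid Q.1 n) ≥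
      v / 4 * (1 - (2 * n * u + Real.sqrt (2 * n * u)) / Real.log M) := by
  have hprob (Q : 𝓖) : IsProbabilityMeasure Q.1 := (h𝓖 Q.1 Q.2).1
  have hPprob := fun i => hprob ⟨P i, hPG i⟩
  simp_rw [KL_eq_klDiv] at hKL
  obtain ⟨hfin, hsum⟩ := sum_toReal_le_of_inv_mul_sum_le (by omega) hu.le hKL
  have hlog : 0 < Real.log M := Real.log_pos (by exact_mod_cast hM)
  have hweaken : n * u + √(n * u) ≤ 2 * n * u + √(2 * n * u) := by
    gcongr <;> nlinarith [Nat.cast_nonneg (α := ℝ) n]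
  have : Nonempty {A : Estimator d n // A.Meas} := ⟨⟨fun _ _ => 0, measurable_const⟩⟩
  refine le_ciInf fun A => ?_
  obtain ⟨i, hi⟩ := exists_le_integral_excess01 hM P hv.le
    (fun j hj => hfin j (Finset.mem_erase.2 ⟨hj, Finset.mem_univ j⟩)) hsum hsep A.2
  have hbdd : BddAbove (Set.range fun Q : 𝓖 => ∫ ω, excess01 Q.1 (A.1 ω) ∂iid Q.1 n) :=
    ⟨1, by rintro _ ⟨Q, rfl⟩; exact integral_excess01_le_one _ _ _⟩
  calc v / 4 * (1 - (2 * n * u + √(2 * n * u)) / Real.log M)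
      ≤ v / 4 * (1 - (n * u + √(n * u)) / Real.log M) := by gcongr
    _ ≤ _ := hi.trans (le_ciSup hbdd ⟨P i, hPG i⟩)

/-- Lemma 6.11 : Fano-type minimax lower bound. -/
theorem statement_17
    (d n M : ℕ) (hd : 0 < d) (hn : 0 < n) (hM : 2 ≤ M)
    (𝓖 : Set (Measure ((Fin d → ℝ) × ℝ)))
    (h𝓖 : ∀ P ∈ 𝓖, IsProbabilityMeasure P ∧ P (cube d ×ˢ labels) = 1)
    (u v : ℝ) (hu : 0 < u) (hv : 0 < v)
    (P : Fin (M + 1) → Measure ((Fin d → ℝ) × ℝ)) (hPG : ∀ j, P j ∈ 𝓖)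
    (hKL : (M : ℝ≥0∞)⁻¹ * ∑ j ∈ Finset.univ.erase (0 : Fin (M + 1)), KL (P j) (P 0) ≤
      ENNReal.ofReal u)
    (hsep : ∀ i j : Fin (M + 1), i ≠ j →
      ∀ f : (Fin d → ℝ) → ℝ, Measurable f → v ≤ excess01 (P i) f + excess01 (P j) f) :
    (⨅ A : {A : Estimator d n // A.Meas},
        ⨆ Q : 𝓖, ∫ ω, excess01 Q.1 (A.1 ω) ∂iid Q.1 n) ≥
      v / 4 * (1 - (2 * n * u + Real.sqrt (2 * n * u)) / Real.log M) :=
  statement_17_general d n M hM 𝓖 h𝓖 u v hu hv P hPG hKL hsep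

end ZZS
end
end
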